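/- arXiv:cs/0007029 — 6 statements merged into one kernel-verified Lean document; each statement's English description precedes it below -/
import Mathlib

section
/- The function F_2 : (0,1) → ℝ defined by F_2(x) = ln x/(x−1) is a strictly decreasing bijection from the open interval (0,1) onto (1,∞); in particular, for every real y > 1 there is a unique x ∈ (0,1) with ln x/(x−1) = y. -/
open Real Set Filter Topology

/-! `log x / (x - 1)` is the slope of the secant of `log` through `1` and `x`, so strict
concavity of `log` makes it strictly decreasing, and `log x < x - 1` puts it above `1` on
`(0, 1)`. It tends to `+∞` at `0⁺` and to `log' 1 = 1` at `1⁻`, so by the intermediate value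
theorem it takes every value in `(1, ∞)`. -/

theorem ContinuousOn.surjOn_Ioi_of_tendsto {α δ : Type*} [ConditionallyCompleteLinearOrder α]
    [TopologicalSpace α] [OrderTopology α] [DenselyOrdered α] [LinearOrder δ]
    [TopologicalSpace δ] [OrderClosedTopology δ] {f : α → δ} {a b : α} {c : δ} (hab : a < b)
    (hf : ContinuousOn f (Ioo a b)) (ha : Tendsto f (𝓝[>] a) atTop)
    (hb : Tendsto f (𝓝[<] b) (𝓝 c)) : SurjOn f (Ioo a b) (Ioi c) :=
  have := nhdsLT_neBot_of_exists_lt ⟨a, hab⟩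
  have := nhdsGT_neBot_of_exists_gt ⟨b, hab⟩
  isPreconnected_Ioo.intermediate_value_Ioi (le_principal_iff.2 (Ioo_mem_nhdsLT hab))
    (le_principal_iff.2 (Ioo_mem_nhdsGT hab)) hf hb ha

theorem StrictConcaveOn.strictAntiOn_slope {𝕜 : Type*} [Field 𝕜] [LinearOrder 𝕜]
    [IsStrictOrderedRing 𝕜] {s : Set 𝕜} {f : 𝕜 → 𝕜} {a : 𝕜}
    (hf : StrictConcaveOn 𝕜 s f) (ha : a ∈ s) :
    StrictAntiOn (fun x => (f x - f a) / (x - a)) (s \ {a}) :=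
  fun _ hx _ hy hxy => hf.secant_strict_mono ha hx.1 hy.1 hx.2 hy.2 hxy

theorem strictAntiOn_log_div_sub_one : StrictAntiOn (fun x => log x / (x - 1)) (Ioi 0 \ {1}) := by
  simpa only [log_one, sub_zero] using
    strictConcaveOn_log_Ioi.strictAntiOn_slope (mem_Ioi.2 one_pos)

theorem one_lt_log_div_sub_one {x : ℝ} (hx0 : 0 < x) (hx1 : x < 1) : 1 < log x / (x - 1) := by
  rw [lt_div_iff_of_neg (sub_neg.2 hx1), one_mul]
  exact log_lt_sub_one_of_pos hx0 hx1.ne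

theorem tendsto_log_div_sub_one_nhdsGT_zero :
    Tendsto (fun x => log x / (x - 1)) (𝓝[>] 0) atTop := by
  have hinv : Tendsto (fun x : ℝ => (x - 1)⁻¹) (𝓝[>] 0) (𝓝 (-1)) := by
    have := ((continuous_sub_right (1 : ℝ)).tendsto 0).inv₀ (by norm_num)
    norm_num at this
    exact this.mono_left nhdsWithin_le_nhds
  exact tendsto_log_nhdsGT_zero.atBot_mul_neg (by norm_num) hinv

theorem tendsto_log_div_sub_one_nhdsNE_one :
    Tendsto (fun x => log x / (x - 1)) (𝓝[≠] 1) (𝓝 1) := by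
  have := (hasDerivAt_log one_ne_zero).tendsto_slope
  simpa [slope_fun_def_field] using this

theorem continuousOn_log_div_sub_one : ContinuousOn (fun x => log x / (x - 1)) {0, 1}ᶜ :=
  fun x hx => by
    simp only [mem_compl_iff, mem_insert_iff, mem_singleton_iff, not_or] at hx
    exact ((continuousAt_log hx.1).div (continuousAt_id.sub continuousAt_const)
      (sub_ne_zero.2 hx.2)).continuousWithinAt

/-- The function `F₂(x) = ln x / (x−1)` is a strictly decreasing
bijection from the open interval `(0,1)` onto `(1,∞)`; in particular, for every real
`y > 1` there is a unique `x ∈ (0,1)` with `ln x / (x−1) = y`. -/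
theorem F2_strictAnti_bijOn :
    StrictAntiOn (fun x : ℝ => Real.log x / (x - 1)) (Set.Ioo 0 1) ∧
    Set.BijOn (fun x : ℝ => Real.log x / (x - 1)) (Set.Ioo 0 1) (Set.Ioi 1) ∧
    ∀ y : ℝ, 1 < y → ∃! x : ℝ, x ∈ Set.Ioo (0 : ℝ) 1 ∧ Real.log x / (x - 1) = y := by
  have hanti := strictAntiOn_log_div_sub_one.mono fun x (hx : x ∈ Ioo 0 1) => ⟨hx.1, hx.2.ne⟩
  have hcont : ContinuousOn (fun x => log x / (x - 1)) (Ioo 0 1) :=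
    continuousOn_log_div_sub_one.mono fun x hx => by simp [hx.1.ne', hx.2.ne]
  have hsurj : SurjOn (fun x => log x / (x - 1)) (Ioo 0 1) (Ioi 1) :=
    hcont.surjOn_Ioi_of_tendsto one_pos tendsto_log_div_sub_one_nhdsGT_zero
      (tendsto_log_div_sub_one_nhdsNE_one.mono_left (nhdsWithin_mono _ fun _ hx => hx.ne))
  have hbij : BijOn (fun x => log x / (x - 1)) (Ioo 0 1) (Ioi 1) :=
    ⟨fun x hx => one_lt_log_div_sub_one hx.1 hx.2, hanti.injOn, hsurj⟩
  refine ⟨hanti, hbij, fun y hy => ?_⟩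
  obtain ⟨x, hx, rfl⟩ := hsurj hy
  exact ⟨x, ⟨hx, rfl⟩, fun x' ⟨hx', h⟩ => hbij.injOn hx' hx h⟩
end

section
/- For each n, let a_n white balls and b_n black balls be thrown independently and uniformly at random into n bins. If min(a_n,b_n)/√n → ∞ as n → ∞, then the probability that some bin contains both a white ball and a black ball tends to 1 as n → ∞. -/
open Filter Topology

/-- The probability, when `a` white balls (indexed by `Fin a`) and `b` black balls
(indexed by `Fin b`) are thrown independently and uniformly at random into `n` bins,
that some bin contains both a white and a black ball. -/
noncomputable def collisionProb (n a b : ℕ) : ℝ :=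
  (Nat.card {ω : Fin a ⊕ Fin b → Fin n //
      ∃ i : Fin a, ∃ j : Fin b, ω (Sum.inl i) = ω (Sum.inr j)} : ℝ) /
    (Nat.card (Fin a ⊕ Fin b → Fin n) : ℝ)

open Finset

section Aux
variable {α β : Type*} [Fintype α] [DecidableEq α] [Fintype β] [DecidableEq β]

def extendOne (x : α) (u : ({z : α // z ≠ x} → β) → β) :
    {f : α → β // f x = u (fun z => f z.1)} ≃ ({z : α // z ≠ x} → β) where
  toFun f z := f.1 z.1
  invFun g := ⟨fun z => if h : z = x then u g else g ⟨z, h⟩, by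
    have hg : (fun z : {z : α // z ≠ x} =>
        (fun w => if h : w = x then u g else g ⟨w, h⟩) z.1) = g := by
      funext z; simp [z.2]
    exact (dif_pos rfl).trans (congrArg u hg.symm)⟩
  left_inv f := by
    ext z
    by_cases h : z = x
    · subst h
      simpa using f.2.symm
    · simp [h]
  right_inv g := by
    funext z
    simp [z.2]

theorem card_one (x : α) (u : ({z : α // z ≠ x} → β) → β) :
    Fintype.card {f : α → β // f x = u (fun z => f z.1)} =
      Fintype.card β ^ (Fintype.card α - 1) := by
  rw [Fintype.card_congr (extendOne x u), Fintype.card_fun]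
  congr 1
  rw [Fintype.card_subtype_compl (p := fun z => z = x), Fintype.card_subtype_eq]

def extendTwo (x y : α) (hxy : x ≠ y) (u v : ({z : α // z ≠ x ∧ z ≠ y} → β) → β) :
    {f : α → β // f x = u (fun z => f z.1) ∧ f y = v (fun z => f z.1)} ≃
      ({z : α // z ≠ x ∧ z ≠ y} → β) where
  toFun f z := f.1 z.1
  invFun g := ⟨fun z => if h : z = x then u g else if h' : z = y then v g else g ⟨z, h, h'⟩, by
    have hg : (fun z : {z : α // z ≠ x ∧ z ≠ y} =>
        (fun w => if h : w = x then u g else if h' : w = y then v g else g ⟨w, h, h'⟩) z.1) = g := by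
      funext z; simp [z.2.1, z.2.2]
    constructor
    · exact (dif_pos rfl).trans (congrArg u hg.symm)
    · refine ((dif_neg hxy.symm).trans (dif_pos rfl)).trans (congrArg v hg.symm)⟩
  left_inv f := by
    ext z
    by_cases h : z = x
    · subst h; simpa using f.2.1.symm
    · by_cases h' : z = y
      · subst h'; simpa [h] using f.2.2.symm
      · simp [h, h']
  right_inv g := by
    funext z
    simp [z.2.1, z.2.2]

theorem card_two (x y : α) (hxy : x ≠ y) (u v : ({z : α // z ≠ x ∧ z ≠ y} → β) → β) :
    Fintype.card {f : α → β // f x = u (fun z => f z.1) ∧ f y = v (fun z => f z.1)} =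
      Fintype.card β ^ (Fintype.card α - 2) := by
  rw [Fintype.card_congr (extendTwo x y hxy u v), Fintype.card_fun]
  congr 1
  rw [Fintype.card_subtype]
  rw [show univ.filter (fun z : α => z ≠ x ∧ z ≠ y) = univ \ {x, y} by
    ext z; simp [not_or]]
  rw [card_sdiff_of_subset (by simp)]
  rw [card_insert_of_notMem (by simpa using hxy), card_singleton, card_univ]

end Aux

theorem count_single (n a b : ℕ) (i : Fin a) (j : Fin b) :
    (univ.filter fun ω : Fin a ⊕ Fin b → Fin n => ω (.inl i) = ω (.inr j)).card
      = n ^ (a + b - 1) := by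
  rw [← Fintype.card_subtype]
  have h := card_one (β := Fin n) (x := (Sum.inl i : Fin a ⊕ Fin b))
    (u := fun g => g ⟨.inr j, by simp⟩)
  simpa using h

theorem count_pair {n a b : ℕ} {i i' : Fin a} {j j' : Fin b}
    (hpq : ¬(i = i' ∧ j = j')) :
    (univ.filter fun ω : Fin a ⊕ Fin b → Fin n =>
      ω (.inl i) = ω (.inr j) ∧ ω (.inl i') = ω (.inr j')).card = n ^ (a + b - 2) := by
  rw [← Fintype.card_subtype]
  by_cases hj : j = j'
  · subst hj
    have hi : i ≠ i' := fun hh => hpq ⟨hh, rfl⟩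
    have h := card_two (β := Fin n) (x := (Sum.inl i : Fin a ⊕ Fin b)) (y := (Sum.inl i'))
      (by simpa using hi)
      (u := fun g => g ⟨.inr j, by simp⟩) (v := fun g => g ⟨.inr j, by simp⟩)
    simpa using h
  · have h := card_two (β := Fin n) (x := (Sum.inr j : Fin a ⊕ Fin b)) (y := (Sum.inr j'))
      (by simpa using hj)
      (u := fun g => g ⟨.inl i, by simp⟩) (v := fun g => g ⟨.inl i', by simp⟩)
    simp only [Fintype.card_sum, Fintype.card_fin, Fintype.card_fun] at h
    rw [← h]
    apply Fintype.card_congr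
    exact Equiv.subtypeEquivRight (fun f => by
      constructor
      · rintro ⟨h1, h2⟩; exact ⟨h1.symm, h2.symm⟩
      · rintro ⟨h1, h2⟩; exact ⟨h1.symm, h2.symm⟩)

theorem sum_X (n a b : ℕ) :
    (∑ ω : Fin a ⊕ Fin b → Fin n,
      ((univ.filter fun p : Fin a × Fin b => ω (.inl p.1) = ω (.inr p.2)).card : ℝ))
      = a * b * n ^ (a + b - 1) := by
  have h1 : ∀ ω : Fin a ⊕ Fin b → Fin n,
      (((univ.filter fun p : Fin a × Fin b => ω (.inl p.1) = ω (.inr p.2)).card : ℝ))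
      = ∑ p : Fin a × Fin b, if ω (.inl p.1) = ω (.inr p.2) then (1:ℝ) else 0 := by
    intro ω; rw [Finset.sum_boole]
  rw [Finset.sum_congr rfl (fun ω _ => h1 ω), Finset.sum_comm]
  have h2 : ∀ p : Fin a × Fin b,
      (∑ ω : Fin a ⊕ Fin b → Fin n, if ω (.inl p.1) = ω (.inr p.2) then (1:ℝ) else 0)
      = (n:ℝ) ^ (a + b - 1) := by
    intro p
    rw [Finset.sum_boole, count_single n a b p.1 p.2]
    push_cast; ring
  rw [Finset.sum_congr rfl (fun p _ => h2 p), Finset.sum_const, card_univ]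
  simp [Fintype.card_prod, mul_assoc]

theorem sum_X_sq (n a b : ℕ) :
    (∑ ω : Fin a ⊕ Fin b → Fin n,
      ((univ.filter fun p : Fin a × Fin b => ω (.inl p.1) = ω (.inr p.2)).card : ℝ) ^ 2)
      = a * b * n ^ (a + b - 1) + (a*b) * ((a*b : ℝ) - 1) * n ^ (a + b - 2) := by
  have h1 : ∀ ω : Fin a ⊕ Fin b → Fin n,
      (((univ.filter fun p : Fin a × Fin b => ω (.inl p.1) = ω (.inr p.2)).card : ℝ)) ^ 2
      = ∑ p : Fin a × Fin b, ∑ q : Fin a × Fin b,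
          if (ω (.inl p.1) = ω (.inr p.2)) ∧ (ω (.inl q.1) = ω (.inr q.2)) then (1:ℝ) else 0 := by
    intro ω
    rw [← Finset.sum_boole (p := fun p : Fin a × Fin b => ω (.inl p.1) = ω (.inr p.2)),
      sq, Finset.sum_mul_sum]
    refine Finset.sum_congr rfl fun p _ => Finset.sum_congr rfl fun q _ => ?_
    by_cases hp : ω (.inl p.1) = ω (.inr p.2) <;>
      by_cases hq : ω (.inl q.1) = ω (.inr q.2) <;> simp [hp, hq]
  rw [Finset.sum_congr rfl (fun ω _ => h1 ω), Finset.sum_comm]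
  have h2 : ∀ p : Fin a × Fin b,
      (∑ ω : Fin a ⊕ Fin b → Fin n, ∑ q : Fin a × Fin b,
        if (ω (.inl p.1) = ω (.inr p.2)) ∧ (ω (.inl q.1) = ω (.inr q.2)) then (1:ℝ) else 0)
      = (n:ℝ) ^ (a + b - 1) + ((a*b:ℝ) - 1) * n ^ (a + b - 2) := by
    intro p
    rw [Finset.sum_comm]
    have h3 : ∀ q : Fin a × Fin b, q ≠ p →
        (∑ ω : Fin a ⊕ Fin b → Fin n,
          if (ω (.inl p.1) = ω (.inr p.2)) ∧ (ω (.inl q.1) = ω (.inr q.2)) then (1:ℝ) else 0)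
        = (n:ℝ) ^ (a + b - 2) := by
      intro q hq
      rw [Finset.sum_boole, count_pair (i := p.1) (j := p.2) (i' := q.1) (j' := q.2)
        (by intro hh; exact hq (Prod.ext hh.1.symm hh.2.symm))]
      push_cast; ring
    have h4 : (∑ ω : Fin a ⊕ Fin b → Fin n,
          if (ω (.inl p.1) = ω (.inr p.2)) ∧ (ω (.inl p.1) = ω (.inr p.2)) then (1:ℝ) else 0)
        = (n:ℝ) ^ (a + b - 1) := by
      simp only [and_self]
      rw [Finset.sum_boole, count_single n a b p.1 p.2]
      push_cast; ring
    have hab : 1 ≤ a * b := Nat.mul_pos p.1.pos p.2.pos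
    rw [← Finset.add_sum_erase _ _ (mem_univ p), h4,
      Finset.sum_congr rfl (fun q hqmem => h3 q (Finset.ne_of_mem_erase hqmem)),
      Finset.sum_const, Finset.card_erase_of_mem (mem_univ p), card_univ]
    simp only [Fintype.card_prod, Fintype.card_fin, nsmul_eq_mul]
    push_cast [Nat.cast_sub hab]
    ring
  rw [Finset.sum_congr rfl (fun p _ => h2 p), Finset.sum_const, card_univ]
  simp [Fintype.card_prod]
  ring

theorem collisionProb_ge (n a b : ℕ) (hn : 1 ≤ n) (ha : 1 ≤ a) (hb : 1 ≤ b) :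
    1 - (n:ℝ)/(a*b) ≤ collisionProb n a b := by
  obtain ⟨e, he⟩ : ∃ e, a + b = e + 2 := ⟨a + b - 2, by omega⟩
  set X : (Fin a ⊕ Fin b → Fin n) → ℕ :=
    fun ω => (univ.filter fun p : Fin a × Fin b => ω (.inl p.1) = ω (.inr p.2)).card with hX
  set A : ℝ := (a : ℝ) * b with hA
  have hApos : (0:ℝ) < A := by
    have : (1:ℝ) ≤ a := by exact_mod_cast ha
    have : (1:ℝ) ≤ b := by exact_mod_cast hb
    positivity
  have hnpos : (0:ℝ) < n := by exact_mod_cast hn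
  set μ : ℝ := A / n with hμ
  set N0 : ℕ := (univ.filter fun ω : Fin a ⊕ Fin b → Fin n => X ω = 0).card with hN0
  -- total count
  have hcard : Fintype.card (Fin a ⊕ Fin b → Fin n) = n ^ (a + b) := by
    simp [Fintype.card_fun]
  -- Chebyshev step 1
  have step1 : (N0 : ℝ) * μ^2 ≤ ∑ ω : Fin a ⊕ Fin b → Fin n, ((X ω : ℝ) - μ)^2 := by
    have e0 : ∀ ω ∈ (univ.filter fun ω : Fin a ⊕ Fin b → Fin n => X ω = 0),
        ((X ω : ℝ) - μ)^2 = μ^2 := by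
      intro ω hw
      rw [(Finset.mem_filter.mp hw).2]
      push_cast; ring
    have e1 : (N0 : ℝ) * μ^2
        = ∑ ω ∈ (univ.filter fun ω : Fin a ⊕ Fin b → Fin n => X ω = 0), ((X ω : ℝ) - μ)^2 := by
      rw [Finset.sum_congr rfl e0, Finset.sum_const, nsmul_eq_mul]
    rw [e1]
    exact Finset.sum_le_sum_of_subset_of_nonneg (Finset.filter_subset _ _)
      (fun ω _ _ => sq_nonneg _)
  -- Chebyshev step 2
  have step2 : (∑ ω : Fin a ⊕ Fin b → Fin n, ((X ω : ℝ) - μ)^2)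
      = (∑ ω : Fin a ⊕ Fin b → Fin n, ((X ω : ℝ))^2)
        - 2*μ*(∑ ω : Fin a ⊕ Fin b → Fin n, (X ω : ℝ)) + (n:ℝ)^(a+b) * μ^2 := by
    rw [Finset.sum_congr rfl (fun ω _ => by
      show ((X ω : ℝ) - μ)^2 = (X ω : ℝ)^2 - 2*μ*(X ω : ℝ) + μ^2
      ring)]
    rw [Finset.sum_add_distrib, Finset.sum_sub_distrib, ← Finset.mul_sum,
      Finset.sum_const, card_univ, hcard, nsmul_eq_mul]
    push_cast; ring
  have key : (N0 : ℝ) * μ^2 ≤ A * (n:ℝ)^(e+1) := by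
    refine le_trans step1 ?_
    rw [step2, sum_X, sum_X_sq]
    rw [he, hμ]
    have h1 : e + 2 - 1 = e + 1 := by omega
    have h2 : e + 2 - 2 = e := by omega
    rw [h1, h2]
    have hne : (n:ℝ) ≠ 0 := ne_of_gt hnpos
    have hEq : (a:ℝ) * b * (n:ℝ) ^ (e + 1) + (a:ℝ) * b * ((a:ℝ) * b - 1) * (n:ℝ) ^ e
        - 2 * (A / n) * ((a:ℝ) * b * (n:ℝ) ^ (e + 1)) + (n:ℝ) ^ (e + 2) * (A / n) ^ 2
        = A * (n:ℝ) ^ (e+1) - A * (n:ℝ) ^ e := by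
      rw [hA]; field_simp; ring
    rw [hEq]
    have hpos : 0 ≤ A * (n:ℝ)^e := by positivity
    linarith
  -- N0 bound
  have hμpos : 0 < μ := div_pos hApos hnpos
  have hN0le : (N0 : ℝ) ≤ (n:ℝ)^(a+b) * ((n:ℝ)/A) := by
    have h1 : (N0 : ℝ) ≤ A * (n:ℝ)^(e+1) / μ^2 := by
      rw [le_div_iff₀ (by positivity)]
      exact key
    refine h1.trans (le_of_eq ?_)
    rw [hμ, div_pow, he]
    field_simp
    ring
  -- numerator of collisionProb
  have hnum : (Nat.card {ω : Fin a ⊕ Fin b → Fin n //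
      ∃ i : Fin a, ∃ j : Fin b, ω (Sum.inl i) = ω (Sum.inr j)})
      = n ^ (a+b) - N0 := by
    rw [Nat.card_eq_fintype_card, Fintype.card_subtype]
    have hset : (univ.filter fun ω : Fin a ⊕ Fin b → Fin n =>
        ∃ i : Fin a, ∃ j : Fin b, ω (Sum.inl i) = ω (Sum.inr j))
        = univ \ (univ.filter fun ω => X ω = 0) := by
      ext ω
      simp only [mem_filter, mem_univ, true_and, Finset.mem_sdiff]
      rw [hX]
      constructor
      · rintro ⟨i, j, hij⟩
        exact fun hc => by
          have : (i, j) ∈ (univ.filter fun p : Fin a × Fin b =>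
              ω (.inl p.1) = ω (.inr p.2)) := by simp [hij]
          rw [Finset.card_eq_zero.mp hc] at this
          simp at this
      · intro hc
        obtain ⟨p, hp⟩ := Finset.card_pos.mp (Nat.pos_of_ne_zero hc)
        exact ⟨p.1, p.2, (Finset.mem_filter.mp hp).2⟩
    rw [hset, Finset.card_sdiff_of_subset (Finset.filter_subset _ _), card_univ, hcard]
  have hN0leN : N0 ≤ n ^ (a+b) := by
    rw [hN0, ← hcard, ← card_univ]
    exact Finset.card_filter_le _ _
  -- final computation
  rw [collisionProb, hnum, Nat.card_eq_fintype_card, hcard]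
  have hNpos : (0:ℝ) < (n:ℝ)^(a+b) := by positivity
  rw [Nat.cast_sub hN0leN]
  push_cast
  rw [sub_div, div_self (ne_of_gt hNpos)]
  have : (N0:ℝ) / (n:ℝ)^(a+b) ≤ (n:ℝ)/A := by
    rw [div_le_iff₀ hNpos]
    calc (N0:ℝ) ≤ (n:ℝ)^(a+b) * ((n:ℝ)/A) := hN0le
    _ = (n:ℝ)/A * (n:ℝ)^(a+b) := by ring
  linarith


theorem collisionProb_le_one (n a b : ℕ) (hn : 1 ≤ n) : collisionProb n a b ≤ 1 := by
  rw [collisionProb]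
  have hn0 : 0 < n := hn
  have hden : (0:ℝ) < (Nat.card (Fin a ⊕ Fin b → Fin n) : ℝ) := by
    rw [Nat.card_eq_fintype_card, Fintype.card_fun]
    simp only [Fintype.card_sum, Fintype.card_fin]
    positivity
  rw [div_le_one hden]
  have : Nat.card {ω : Fin a ⊕ Fin b → Fin n //
      ∃ i : Fin a, ∃ j : Fin b, ω (Sum.inl i) = ω (Sum.inr j)}
      ≤ Nat.card (Fin a ⊕ Fin b → Fin n) := by
    rw [Nat.card_eq_fintype_card, Nat.card_eq_fintype_card]
    exact Fintype.card_subtype_le _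
  exact_mod_cast this


/-- For each `n`, throw `a_n` white and `b_n` black balls
independently and uniformly at random into `n` bins.  If `min(a_n,b_n)/√n → ∞`, then
the probability that some bin contains balls of both colors tends to `1`. -/
theorem collisionProb_tendsto_one (a b : ℕ → ℕ)
    (h : Tendsto (fun n : ℕ => (min (a n) (b n) : ℝ) / Real.sqrt n) atTop atTop) :
    Tendsto (fun n : ℕ => collisionProb n (a n) (b n)) atTop (𝓝 1) := by
  have hn1 : ∀ᶠ n : ℕ in atTop, 1 ≤ min (a n) (b n) := by
    filter_upwards [h.eventually_ge_atTop 1] with n hn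
    by_contra hc
    push_neg at hc
    have hz : min (a n) (b n) = 0 := by omega
    have hz' : ((a n : ℝ) ⊓ (b n : ℝ)) = 0 := by
      rw [← Nat.cast_min, hz]; simp
    rw [hz'] at hn
    norm_num at hn
  have hinv : Tendsto (fun n : ℕ => ((min (a n) (b n) : ℝ) / Real.sqrt n)⁻¹)
      atTop (𝓝 0) := h.inv_tendsto_atTop
  have hsq : Tendsto (fun n : ℕ => (((min (a n) (b n) : ℝ) / Real.sqrt n)⁻¹)^2)
      atTop (𝓝 0) := by
    have := hinv.mul hinv
    rw [mul_zero] at this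
    simpa [sq] using this
  have hg : Tendsto (fun n : ℕ => (n:ℝ)/((a n : ℝ)*(b n : ℝ))) atTop (𝓝 0) := by
    apply squeeze_zero' ?_ ?_ hsq
    · filter_upwards with n
      positivity
    · filter_upwards [hn1, eventually_ge_atTop 1] with n hmn hn
      rw [← Nat.cast_min]
      have hmpos : (0:ℝ) < ((min (a n) (b n) : ℕ) : ℝ) := by
        exact_mod_cast hmn
      rw [inv_div, div_pow, Real.sq_sqrt (by positivity : (0:ℝ) ≤ (n:ℝ))]
      have hab : (((min (a n) (b n) : ℕ)) : ℝ)^2 ≤ (a n : ℝ) * (b n : ℝ) := by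
        push_cast
        have h1 : ((a n : ℝ) ⊓ (b n : ℝ)) ≤ (a n : ℝ) := min_le_left _ _
        have h2 : ((a n : ℝ) ⊓ (b n : ℝ)) ≤ (b n : ℝ) := min_le_right _ _
        have h0 : (0:ℝ) ≤ ((a n : ℝ) ⊓ (b n : ℝ)) := by positivity
        nlinarith
      exact div_le_div_of_nonneg_left (by positivity) (by positivity) hab
  have hlb : Tendsto (fun n : ℕ => 1 - (n:ℝ)/((a n : ℝ)*(b n : ℝ))) atTop (𝓝 1) := by
    have := tendsto_const_nhds (x := (1:ℝ)) (f := atTop (α := ℕ)) |>.sub hg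
    simpa using this
  apply tendsto_of_tendsto_of_tendsto_of_le_of_le' hlb tendsto_const_nhds
  · filter_upwards [hn1, eventually_ge_atTop 1] with n hmn hn
    have ha1 : 1 ≤ a n := le_trans hmn (Nat.min_le_left _ _)
    have hb1 : 1 ≤ b n := le_trans hmn (Nat.min_le_right _ _)
    exact collisionProb_ge n (a n) (b n) hn ha1 hb1
  · filter_upwards [eventually_ge_atTop 1] with n hn
    exact collisionProb_le_one n (a n) (b n) hn
end

section
/- For every real c > 0, lim_{n→∞} ∏_{j=0}^{n} ( 1 − (1 − (2^j − 1 + (n−j)·2^j)/((n+2)·2^n − 1))^{c·2^n} ) = ∏_{j=0}^{∞} (1 − e^{−c·2^j}). -/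
open Filter Topology
open scoped BigOperators


private noncomputable def pp (n j : ℕ) : ℝ :=
  ((2 : ℝ) ^ j - 1 + ((n : ℝ) - (j : ℝ)) * 2 ^ j) / (((n : ℝ) + 2) * 2 ^ n - 1)

private noncomputable def ff (c : ℝ) (n j : ℕ) : ℝ := 1 - (1 - pp n j) ^ (c * 2 ^ n)

private lemma den_pos (n : ℕ) : 0 < ((n : ℝ) + 2) * 2 ^ n - 1 := by
  have h1 : (1 : ℝ) ≤ 2 ^ n := one_le_pow₀ (by norm_num)
  nlinarith [Nat.cast_nonneg (α := ℝ) n]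

private lemma num_eq (n j : ℕ) :
    (2 : ℝ) ^ j - 1 + ((n : ℝ) - (j : ℝ)) * 2 ^ j = ((n : ℝ) - j + 1) * 2 ^ j - 1 := by
  ring

private lemma num_ge (n j : ℕ) (hj : j ≤ n) (hn : 1 ≤ n) :
    (2 : ℝ) ≤ ((n : ℝ) - j + 1) * 2 ^ j := by
  rcases Nat.eq_zero_or_pos j with rfl | hj1
  · simp only [Nat.cast_zero, pow_zero, sub_zero, mul_one]
    have : (1 : ℝ) ≤ (n : ℝ) := by exact_mod_cast hn
    linarith
  · have h1 : (1 : ℝ) ≤ (n : ℝ) - j + 1 := by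
      have : (j : ℝ) ≤ n := by exact_mod_cast hj
      linarith
    have h2 : (2 : ℝ) ≤ 2 ^ j := by
      calc (2:ℝ) = 2 ^ 1 := (pow_one 2).symm
      _ ≤ 2 ^ j := pow_le_pow_right₀ (by norm_num) hj1
    nlinarith

private lemma num_lt_den (n j : ℕ) (hj : j ≤ n) :
    ((n : ℝ) - j + 1) * 2 ^ j - 1 + 2 ^ n ≤ ((n : ℝ) + 2) * 2 ^ n - 1 := by
  have h1 : ((n : ℝ) - j + 1) ≤ (n : ℝ) + 1 := by
    have : (0:ℝ) ≤ (j : ℝ) := Nat.cast_nonneg j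
    linarith
  have h2 : (2:ℝ) ^ j ≤ 2 ^ n := pow_le_pow_right₀ (by norm_num) hj
  have h3 : (0:ℝ) ≤ (n : ℝ) - j + 1 := by
    have : (j : ℝ) ≤ n := by exact_mod_cast hj
    linarith
  have h4 : (0:ℝ) < (2:ℝ)^n := by positivity
  nlinarith

private lemma pp_pos (n j : ℕ) (hj : j ≤ n) (hn : 1 ≤ n) : 0 < pp n j := by
  rw [pp, num_eq]
  exact div_pos (by nlinarith [num_ge n j hj hn]) (den_pos n)

private lemma one_sub_pp (n j : ℕ) (hj : j ≤ n) :
    (2:ℝ) ^ n / (((n : ℝ) + 2) * 2 ^ n - 1) ≤ 1 - pp n j := by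
  rw [pp, num_eq]
  rw [div_le_iff₀ (den_pos n), sub_mul, one_mul, div_mul_cancel₀ _ (den_pos n).ne']
  nlinarith [num_lt_den n j hj]

private lemma one_sub_pp_pos (n j : ℕ) (hj : j ≤ n) : 0 < 1 - pp n j := by
  calc (0:ℝ) < 2 ^ n / (((n : ℝ) + 2) * 2 ^ n - 1) := div_pos (by positivity) (den_pos n)
  _ ≤ 1 - pp n j := one_sub_pp n j hj

-- aux1 copy for this test file
private lemma aux0' (j : ℕ) (hj : 6 ≤ j) : (2*j+1)*(j+1) ≤ 2^(j+1) := by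
  induction j, hj using Nat.le_induction with
  | base => norm_num
  | succ n hn ih =>
    have h2 : 2^(n+1+1) = 2 * 2^(n+1) := by ring
    rw [h2]; nlinarith [ih, hn]

private lemma aux1' (n j : ℕ) (hj : j ≤ n) (hn : 10 ≤ n) :
    (n+2)*(j+1) ≤ (n-j+1)*2^(j+1) := by
  rcases le_or_gt (2*j) n with h | h
  · have h1 : n+2 ≤ 2*(n-j+1) := by omega
    have h2 : j+1 ≤ 2^j := Nat.lt_two_pow_self (n := j)
    calc (n+2)*(j+1) ≤ (2*(n-j+1))*(2^j) := Nat.mul_le_mul h1 h2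
    _ = (n-j+1)*2^(j+1) := by ring
  · have hj6 : 6 ≤ j := by omega
    calc (n+2)*(j+1) ≤ (2*j+1)*(j+1) := Nat.mul_le_mul_right _ (by omega)
    _ ≤ 2^(j+1) := aux0' j hj6
    _ ≤ (n-j+1)*2^(j+1) := Nat.le_mul_of_pos_left _ (by omega)

private lemma aux1R (n j : ℕ) (hj : j ≤ n) (hn : 10 ≤ n) :
    ((n : ℝ) + 2) * ((j : ℝ) + 1) ≤ ((n : ℝ) - j + 1) * 2 ^ (j+1) := by
  have := aux1' n j hj hn
  have hcast : ((n - j + 1 : ℕ) : ℝ) = (n : ℝ) - j + 1 := by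
    push_cast [Nat.cast_sub hj]; ring
  calc ((n : ℝ) + 2) * ((j : ℝ) + 1) = (((n+2)*(j+1) : ℕ) : ℝ) := by push_cast; ring
  _ ≤ (((n-j+1)*2^(j+1) : ℕ) : ℝ) := by exact_mod_cast this
  _ = ((n : ℝ) - j + 1) * 2 ^ (j+1) := by push_cast [Nat.cast_sub hj]; ring

/-- exponent lower bound -/
private lemma exponent_ge (c : ℝ) (hc : 0 < c) (n j : ℕ) (hj : j ≤ n) (hn : 10 ≤ n) :
    c * ((j : ℝ) + 1) / 4 ≤ c * 2 ^ n * pp n j := by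
  have hn1 : 1 ≤ n := le_trans (by norm_num) hn
  have hD := den_pos n
  have hD2 : (0:ℝ) < ((n : ℝ) + 2) * 2 ^ n := by positivity
  have hNum : (1:ℝ) ≤ ((n : ℝ) - j + 1) * 2 ^ j - 1 := by nlinarith [num_ge n j hj hn1]
  have h4N : ((n : ℝ) + 2) * ((j : ℝ) + 1) ≤ 4 * (((n : ℝ) - j + 1) * 2 ^ j - 1) := by
    have := aux1R n j hj hn
    have h2 : (2:ℝ) ≤ ((n : ℝ) - j + 1) * 2 ^ j := num_ge n j hj hn1
    have hpow : (2:ℝ) ^ (j+1) = 2 * 2 ^ j := by ring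
    nlinarith
  rw [pp, num_eq]
  rw [show c * 2 ^ n * ((((n : ℝ) - j + 1) * 2 ^ j - 1) / (((n : ℝ) + 2) * 2 ^ n - 1))
      = (c * 2 ^ n * (((n : ℝ) - j + 1) * 2 ^ j - 1)) / (((n : ℝ) + 2) * 2 ^ n - 1) from
    (mul_div_assoc _ _ _).symm]
  rw [div_le_div_iff₀ (by norm_num : (0:ℝ) < 4) hD]
  have hA : ((n:ℝ)+2)*((j:ℝ)+1)*2^n ≤ 4*(((n : ℝ) - j + 1) * 2 ^ j - 1)*2^n :=
    mul_le_mul_of_nonneg_right h4N (by positivity)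
  have hB : c*(((n:ℝ)+2)*((j:ℝ)+1)*2^n) ≤ c*(4*(((n : ℝ) - j + 1) * 2 ^ j - 1)*2^n) :=
    mul_le_mul_of_nonneg_left hA hc.le
  nlinarith [mul_pos hc (show (0:ℝ) < (j:ℝ)+1 by positivity)]

private lemma Lb_pos (c : ℝ) (hc : 0 < c) (j : ℕ) :
    0 < 1 - Real.exp (-(c * ((j:ℝ)+1) / 4)) := by
  have : Real.exp (-(c * ((j:ℝ)+1) / 4)) < 1 := by
    rw [Real.exp_lt_one_iff]
    have : (0:ℝ) < (j:ℝ) + 1 := by positivity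
    nlinarith
  linarith

private lemma rpow_le_exp (c : ℝ) (hc : 0 < c) (n j : ℕ) (hj : j ≤ n) (hn : 10 ≤ n) :
    (1 - pp n j) ^ (c * 2 ^ n) ≤ Real.exp (-(c * ((j:ℝ)+1) / 4)) := by
  have h1 : 0 < 1 - pp n j := one_sub_pp_pos n j hj
  rw [Real.rpow_def_of_pos h1]
  apply Real.exp_le_exp.mpr
  have hlog : Real.log (1 - pp n j) ≤ -(pp n j) := by
    have := Real.log_le_sub_one_of_pos h1; linarith
  calc Real.log (1 - pp n j) * (c * 2^n) ≤ -(pp n j) * (c * 2^n) :=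
        mul_le_mul_of_nonneg_right hlog (by positivity)
  _ = -(c * 2^n * pp n j) := by ring
  _ ≤ -(c * ((j:ℝ)+1) / 4) := by linarith [exponent_ge c hc n j hj hn]

private lemma ff_ge (c : ℝ) (hc : 0 < c) (n j : ℕ) (hj : j ≤ n) (hn : 10 ≤ n) :
    1 - Real.exp (-(c * ((j:ℝ)+1) / 4)) ≤ ff c n j := by
  rw [ff]; linarith [rpow_le_exp c hc n j hj hn]

private lemma ff_lt_one (c : ℝ) (n j : ℕ) (hj : j ≤ n) : ff c n j < 1 := by
  rw [ff]
  have := Real.rpow_pos_of_pos (one_sub_pp_pos n j hj) (c * 2^n)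
  linarith

private lemma ff_pos (c : ℝ) (hc : 0 < c) (n j : ℕ) (hj : j ≤ n) (hn : 10 ≤ n) :
    0 < ff c n j := lt_of_lt_of_le (Lb_pos c hc j) (ff_ge c hc n j hj hn)

private lemma norm_log_ff_le (c : ℝ) (hc : 0 < c) (n j : ℕ) (hj : j ≤ n) (hn : 10 ≤ n) :
    ‖Real.log (ff c n j)‖ ≤ -Real.log (1 - Real.exp (-(c * ((j:ℝ)+1) / 4))) := by
  have h0 := Lb_pos c hc j
  have h1 := ff_ge c hc n j hj hn
  have h2 := (ff_lt_one c n j hj).le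
  have hl1 : Real.log (ff c n j) ≤ 0 := Real.log_nonpos (by linarith) h2
  have hl2 : Real.log (1 - Real.exp (-(c * ((j:ℝ)+1) / 4))) ≤ Real.log (ff c n j) :=
    Real.log_le_log h0 h1
  rw [Real.norm_eq_abs, abs_of_nonpos hl1]
  linarith

private lemma Bnd_summable (c : ℝ) (hc : 0 < c) :
    Summable (fun j : ℕ => -Real.log (1 - Real.exp (-(c * ((j:ℝ)+1) / 4)))) := by
  set r : ℝ := Real.exp (-(c/4)) with hr
  have hr0 : 0 < r := Real.exp_pos _
  have hr1 : r < 1 := by rw [hr, Real.exp_lt_one_iff]; linarith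
  have hxj : ∀ j : ℕ, Real.exp (-(c * ((j:ℝ)+1) / 4)) = r ^ (j+1) := by
    intro j
    rw [hr, ← Real.exp_nat_mul]
    congr 1
    push_cast
    ring
  apply Summable.of_nonneg_of_le
  · intro j
    have h0 := Lb_pos c hc j
    have : Real.log (1 - Real.exp (-(c * ((j:ℝ)+1) / 4))) ≤ 0 :=
      Real.log_nonpos (by linarith) (by nlinarith [Real.exp_pos (-(c * ((j:ℝ)+1) / 4))])
    linarith
  · intro j
    show -Real.log (1 - Real.exp (-(c * ((j:ℝ)+1) / 4))) ≤ (1 - r)⁻¹ * r ^ (j+1)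
    rw [hxj j]
    have hx0 : 0 < r ^ (j+1) := pow_pos hr0 _
    have hxr : r ^ (j+1) ≤ r := by
      calc r ^ (j+1) ≤ r ^ 1 := pow_le_pow_of_le_one hr0.le hr1.le (by omega)
      _ = r := pow_one r
    have hx1 : r ^ (j+1) < 1 := lt_of_le_of_lt hxr hr1
    have hkey : -Real.log (1 - r ^ (j+1)) ≤ r ^ (j+1) / (1 - r ^ (j+1)) := by
      rw [show -Real.log (1 - r ^ (j+1)) = Real.log (1 - r ^ (j+1))⁻¹ from (Real.log_inv _).symm]
      have h0 : (0:ℝ) < 1 - r ^ (j+1) := by linarith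
      have h2 := Real.log_le_sub_one_of_pos (inv_pos.mpr h0)
      have heq : (1 - r ^ (j+1))⁻¹ - 1 = r ^ (j+1) / (1 - r ^ (j+1)) := by field_simp; ring
      linarith [heq ▸ h2]
    calc -Real.log (1 - r ^ (j+1)) ≤ r ^ (j+1) / (1 - r ^ (j+1)) := hkey
    _ ≤ r ^ (j+1) / (1 - r) := by
        apply div_le_div_of_nonneg_left hx0.le (by linarith) (by linarith)
    _ = (1 - r)⁻¹ * r ^ (j+1) := (div_eq_inv_mul _ _)
  · have h := (summable_geometric_of_lt_one hr0.le hr1).mul_left ((1 - r)⁻¹ * r)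
    exact h.congr (fun j => by rw [pow_succ]; ring)

private lemma tendsto_q (c : ℝ) (hc : 0 < c) (j : ℕ) :
    Tendsto (fun n : ℕ => c * 2 ^ n * pp n j) atTop (𝓝 (c * 2 ^ j)) := by
  have hnat : Tendsto (fun n : ℕ => (n : ℝ)) atTop atTop := tendsto_natCast_atTop_atTop
  have hinv : Tendsto (fun n : ℕ => ((n : ℝ))⁻¹) atTop (𝓝 0) := hnat.inv_tendsto_atTop
  have hA : Tendsto (fun n : ℕ => ((2:ℝ)^j - 1 - j * 2^j) * ((n:ℝ))⁻¹ + 2^j) atTop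
      (𝓝 ((2:ℝ)^j)) := by
    have := (tendsto_const_nhds (x := ((2:ℝ)^j - 1 - j * 2^j)) (f := atTop)).mul hinv
    simpa using this.add (tendsto_const_nhds (x := (2:ℝ)^j))
  have hNn : Tendsto (fun n : ℕ =>
      ((2 : ℝ) ^ j - 1 + ((n : ℝ) - (j : ℝ)) * 2 ^ j) / (n : ℝ)) atTop (𝓝 ((2:ℝ)^j)) := by
    apply hA.congr'
    filter_upwards [eventually_ge_atTop 1] with n hn
    have hn0 : ((n:ℝ)) ≠ 0 := by positivity
    field_simp
    ring
  have h2n : Tendsto (fun n : ℕ => (2:ℝ)^n) atTop atTop :=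
    tendsto_pow_atTop_atTop_of_one_lt one_lt_two
  have hn2n : Tendsto (fun n : ℕ => (n : ℝ) * 2^n) atTop atTop := hnat.atTop_mul_atTop₀ h2n
  have hinv2 : Tendsto (fun n : ℕ => ((n : ℝ) * 2^n)⁻¹) atTop (𝓝 0) := hn2n.inv_tendsto_atTop
  have hDn : Tendsto (fun n : ℕ =>
      (((n : ℝ) + 2) * 2 ^ n - 1) / ((n : ℝ) * 2^n)) atTop (𝓝 1) := by
    have hB : Tendsto (fun n : ℕ => 1 + 2 * ((n:ℝ))⁻¹ - ((n : ℝ) * 2^n)⁻¹) atTop (𝓝 1) := by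
      have := ((tendsto_const_nhds (x := (1:ℝ)) (f := atTop)).add
        ((tendsto_const_nhds (x := (2:ℝ)) (f := atTop)).mul hinv)).sub hinv2
      simpa using this
    apply hB.congr'
    filter_upwards [eventually_ge_atTop 1] with n hn
    have hn0 : ((n:ℝ)) ≠ 0 := by positivity
    have h2n0 : ((2:ℝ)^n) ≠ 0 := by positivity
    field_simp
  have hdiv : Tendsto (fun n : ℕ =>
      c * (((2 : ℝ) ^ j - 1 + ((n : ℝ) - (j : ℝ)) * 2 ^ j) / (n : ℝ)) /
        ((((n : ℝ) + 2) * 2 ^ n - 1) / ((n : ℝ) * 2^n))) atTop (𝓝 (c * 2^j)) := by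
    have := ((tendsto_const_nhds (x := c) (f := atTop)).mul hNn).div hDn one_ne_zero
    rw [div_one] at this
    exact this
  apply hdiv.congr'
  filter_upwards [eventually_ge_atTop 1] with n hn
  have hn0 : ((n:ℝ)) ≠ 0 := by positivity
  have h2n0 : ((2:ℝ)^n) ≠ 0 := by positivity
  have hD := (den_pos n).ne'
  rw [pp]
  field_simp

private lemma tendsto_pp (c : ℝ) (hc : 0 < c) (j : ℕ) :
    Tendsto (fun n : ℕ => pp n j) atTop (𝓝 0) := by
  have hE : Tendsto (fun n : ℕ => c * 2^n) atTop atTop :=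
    (tendsto_pow_atTop_atTop_of_one_lt one_lt_two).const_mul_atTop hc
  have := (tendsto_q c hc j).div_atTop hE
  apply this.congr
  intro n
  have : c * 2^n ≠ 0 := by positivity
  field_simp

private lemma tendsto_log_ff (c : ℝ) (hc : 0 < c) (j : ℕ) :
    Tendsto (fun n : ℕ => Real.log (ff c n j)) atTop
      (𝓝 (Real.log (1 - Real.exp (-(c * 2 ^ j))))) := by
  have hev : ∀ᶠ n : ℕ in atTop, j ≤ n ∧ 1 ≤ n := by
    filter_upwards [eventually_ge_atTop j, eventually_ge_atTop 1] with n h1 h2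
    exact ⟨h1, h2⟩
  have hppz : Tendsto (fun n : ℕ => pp n j) atTop (𝓝[≠] 0) := by
    apply tendsto_nhdsWithin_of_tendsto_nhds_of_eventually_within _ (tendsto_pp c hc j)
    filter_upwards [hev] with n hn
    exact (pp_pos n j hn.1 hn.2).ne'
  have hd : HasDerivAt (fun x : ℝ => Real.log (1 - x)) (-1) 0 := by
    have h1 : HasDerivAt (fun x : ℝ => 1 - x) (-1) 0 := by
      simpa using (hasDerivAt_id (0:ℝ)).const_sub 1
    have h2 := (Real.hasDerivAt_log (by norm_num : (1:ℝ) - 0 ≠ 0)).comp 0 h1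
    simpa [Function.comp_def] using h2
  have hslope := hasDerivAt_iff_tendsto_slope.mp hd
  have hratio : Tendsto (fun n : ℕ => Real.log (1 - pp n j) / pp n j) atTop (𝓝 (-1)) := by
    apply (hslope.comp hppz).congr
    intro n
    simp [slope_def_field]
  have hElog : Tendsto (fun n : ℕ => Real.log (1 - pp n j) * (c * 2^n)) atTop
      (𝓝 (-(c * 2^j))) := by
    have h := (tendsto_q c hc j).mul hratio
    rw [show c * 2^j * (-1) = -(c * (2:ℝ)^j) by ring] at h
    apply h.congr'
    filter_upwards [hev] with n hn
    have hp0 : pp n j ≠ 0 := (pp_pos n j hn.1 hn.2).ne'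
    field_simp
  have hrpow : Tendsto (fun n : ℕ => (1 - pp n j) ^ (c * 2^n)) atTop
      (𝓝 (Real.exp (-(c * 2 ^ j)))) := by
    have h := (Real.continuous_exp.tendsto _).comp hElog
    apply h.congr'
    filter_upwards [hev] with n hn
    exact (Real.rpow_def_of_pos (one_sub_pp_pos n j hn.1) _).symm
  have hff : Tendsto (fun n : ℕ => ff c n j) atTop
      (𝓝 (1 - Real.exp (-(c * 2 ^ j)))) := tendsto_const_nhds.sub hrpow
  have hgpos : 0 < 1 - Real.exp (-(c * 2 ^ j)) := by
    have : Real.exp (-(c * 2 ^ j)) < 1 := by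
      rw [Real.exp_lt_one_iff]
      have : (0:ℝ) < 2^j := by positivity
      nlinarith
    linarith
  exact ((Real.continuousAt_log hgpos.ne').tendsto.comp hff)

/-- For every real `c > 0`,
`lim_{n→∞} ∏_{j=0}^{n} (1 − (1 − (2^j − 1 + (n−j)·2^j)/((n+2)·2^n − 1))^{c·2^n})
  = ∏_{j=0}^{∞} (1 − e^{−c·2^j})`,
where the inner power is a real power with real exponent `c·2^n`. -/
theorem corrected_meanfield_product_tendsto (c : ℝ) (hc : 0 < c) :
    Tendsto
      (fun n : ℕ => ∏ j ∈ Finset.range (n + 1),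
        (1 - (1 - ((2 : ℝ) ^ j - 1 + ((n : ℝ) - (j : ℝ)) * 2 ^ j) /
            (((n : ℝ) + 2) * 2 ^ n - 1)) ^ (c * 2 ^ n)))
      atTop (𝓝 (∏' j : ℕ, (1 - Real.exp (-(c * 2 ^ j))))) := by
  have gpos : ∀ j : ℕ, 0 < 1 - Real.exp (-(c * 2 ^ j)) := by
    intro j
    have : Real.exp (-(c * 2 ^ j)) < 1 := by
      rw [Real.exp_lt_one_iff]
      have : (0:ℝ) < 2^j := by positivity
      nlinarith
    linarith
  have hBsum := Bnd_summable c hc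
  have Bnd_nonneg : ∀ k : ℕ, 0 ≤ -Real.log (1 - Real.exp (-(c * ((k:ℝ)+1) / 4))) := by
    intro k
    have h0 := Lb_pos c hc k
    have := Real.log_nonpos (x := 1 - Real.exp (-(c * ((k:ℝ)+1) / 4))) (by linarith)
      (by nlinarith [Real.exp_pos (-(c * ((k:ℝ)+1) / 4))])
    linarith
  set F : ℕ → ℕ → ℝ := fun n j => if j ≤ n then Real.log (ff c n j) else 0 with hF
  have hpt : ∀ k : ℕ, Tendsto (fun n => F n k) atTop
      (𝓝 (Real.log (1 - Real.exp (-(c * 2 ^ k))))) := by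
    intro k
    apply (tendsto_log_ff c hc k).congr'
    filter_upwards [eventually_ge_atTop k] with n hn
    simp [hF, hn]
  have hbound : ∀ᶠ n in atTop, ∀ k,
      ‖F n k‖ ≤ -Real.log (1 - Real.exp (-(c * ((k:ℝ)+1) / 4))) := by
    filter_upwards [eventually_ge_atTop 10] with n hn k
    by_cases hk : k ≤ n
    · simp only [hF, if_pos hk]
      exact norm_log_ff_le c hc n k hk hn
    · simp only [hF, if_neg hk, norm_zero]
      exact Bnd_nonneg k
  have hmain := tendsto_tsum_of_dominated_convergence hBsum hpt hbound
  have hLsum : Summable (fun k : ℕ => Real.log (1 - Real.exp (-(c * 2 ^ k)))) := by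
    apply Summable.of_norm_bounded hBsum
    intro k
    have h0 := Lb_pos c hc k
    have hgk := gpos k
    have hexple : Real.exp (-(c * 2 ^ k)) ≤ Real.exp (-(c * ((k:ℝ)+1) / 4)) := by
      apply Real.exp_le_exp.mpr
      have h2k : (k:ℝ) + 1 ≤ 2 ^ k := by
        exact_mod_cast Nat.lt_two_pow_self (n := k)
      nlinarith
    have h1 : 1 - Real.exp (-(c * ((k:ℝ)+1) / 4)) ≤ 1 - Real.exp (-(c * 2 ^ k)) := by linarith
    have hl1 : Real.log (1 - Real.exp (-(c * 2 ^ k))) ≤ 0 :=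
      Real.log_nonpos (by linarith) (by nlinarith [Real.exp_pos (-(c * 2 ^ k))])
    have hl2 := Real.log_le_log h0 h1
    rw [Real.norm_eq_abs, abs_of_nonpos hl1]
    linarith
  have hprod : HasProd (fun j : ℕ => 1 - Real.exp (-(c * 2 ^ j)))
      (Real.exp (∑' k, Real.log (1 - Real.exp (-(c * 2 ^ k))))) := by
    have h := hLsum.hasSum.rexp
    have hfun : (Real.exp ∘ fun k : ℕ => Real.log (1 - Real.exp (-(c * 2 ^ k))))
        = fun j : ℕ => 1 - Real.exp (-(c * 2 ^ j)) := by
      funext j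
      exact Real.exp_log (gpos j)
    rwa [hfun] at h
  rw [hprod.tprod_eq]
  have hexp := (Real.continuous_exp.tendsto _).comp hmain
  refine Tendsto.congr' ?_ hexp
  filter_upwards [eventually_ge_atTop 10] with n hn
  have hts : ∑' k, F n k = ∑ j ∈ Finset.range (n+1), Real.log (ff c n j) := by
    rw [tsum_eq_sum (s := Finset.range (n+1)) ?_]
    · apply Finset.sum_congr rfl
      intro j hj
      simp [hF, Nat.lt_succ_iff.mp (Finset.mem_range.mp hj)]
    · intro j hj
      have : ¬ (j ≤ n) := by
        intro h
        exact hj (Finset.mem_range.mpr (Nat.lt_succ_of_le h))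
      simp [hF, this]
  show Real.exp (∑' k, F n k) = _
  rw [hts, Real.exp_sum]
  apply Finset.prod_congr rfl
  intro j hj
  have hjn := Nat.lt_succ_iff.mp (Finset.mem_range.mp hj)
  rw [Real.exp_log (ff_pos c hc n j hjn hn)]
  rfl
end

section
/- For every real c > 0, the factor corresponding to j = 1 with the binomial exponent, namely ( 1 − (1 − (2n−1)/((n+2)·2^n − 1))^{c·2^n} )^{n}, tends to 0 as n → ∞; consequently, since every factor lies in (0,1), lim_{n→∞} ∏_{j=0}^{n} ( 1 − (1 − (2^j − 1 + (n−j)·2^j)/((n+2)·2^n − 1))^{c·2^n} )^{C(n,j)} = 0. -/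
open Filter Topology
open scoped BigOperators

private lemma aux_exp_le (x : ℝ) (hx0 : 0 ≤ x) (hx : x ≤ 1/2) :
    Real.exp (-(2*x)) ≤ 1 - x := by
  have h1 : 1 + 2*x ≤ Real.exp (2*x) := by
    have := Real.add_one_le_exp (2*x); linarith
  have hpos : (0:ℝ) < 1 + 2*x := by linarith
  rw [Real.exp_neg]
  have h3 : (Real.exp (2*x))⁻¹ ≤ (1 + 2*x)⁻¹ := by
    apply inv_anti₀ hpos h1
  have h4 : (1 + 2*x)⁻¹ ≤ 1 - x := by
    rw [inv_le_iff_one_le_mul₀ hpos] <;> nlinarith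
  linarith

private lemma aux_D_pos (n : ℕ) : (0:ℝ) < ((n:ℝ) + 2) * 2 ^ n - 1 := by
  have h1 : (1:ℝ) ≤ 2 ^ n := one_le_pow₀ (by norm_num)
  have h2 : (0:ℝ) ≤ (n:ℝ) := Nat.cast_nonneg n
  nlinarith

private lemma aux_key (c : ℝ) (hc : 0 < c) (n : ℕ) (hn : 2 ≤ n) :
    Real.exp (-(4*c)) ≤ (1 - (2*(n:ℝ)-1)/(((n:ℝ)+2)*2^n-1)) ^ (c*2^n) ∧
    (1 - (2*(n:ℝ)-1)/(((n:ℝ)+2)*2^n-1)) ^ (c*2^n) ≤ 1 := by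
  have hD := aux_D_pos n
  set D : ℝ := ((n:ℝ)+2)*2^n - 1 with hDdef
  have hn' : (2:ℝ) ≤ (n:ℝ) := by exact_mod_cast hn
  have hp1 : (1:ℝ) ≤ 2 ^ n := one_le_pow₀ (by norm_num)
  set x : ℝ := (2*(n:ℝ)-1)/D with hxdef
  have hx0 : 0 ≤ x := div_nonneg (by linarith) hD.le
  have hx2 : x * 2^n ≤ 2 := by
    rw [hxdef, div_mul_eq_mul_div, div_le_iff₀ hD]
    nlinarith
  have hp4 : (4:ℝ) ≤ 2 ^ n := by
    calc (4:ℝ) = 2^2 := by norm_num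
      _ ≤ 2^n := pow_le_pow_right₀ (by norm_num) hn
  have hxhalf : x ≤ 1/2 := by
    rw [hxdef, div_le_iff₀ hD]
    nlinarith [mul_nonneg (by linarith : (0:ℝ) ≤ (n:ℝ)+2) (by linarith : (0:ℝ) ≤ 2^n - 4)]
  have hexp : (0:ℝ) ≤ c * 2^n := by positivity
  constructor
  · have hle : Real.exp (-(2*x)) ≤ 1 - x := aux_exp_le x hx0 hxhalf
    have h1 : Real.exp (-(2*x)) ^ (c*2^n) ≤ (1-x) ^ (c*2^n) :=
      Real.rpow_le_rpow (Real.exp_pos _).le hle hexp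
    have h2 : Real.exp (-(2*x)) ^ (c*2^n) = Real.exp (-(2*x) * (c*2^n)) := by
      rw [← Real.exp_mul]
    have h3 : Real.exp (-(4*c)) ≤ Real.exp (-(2*x) * (c*2^n)) := by
      apply Real.exp_le_exp.mpr
      nlinarith
    calc Real.exp (-(4*c)) ≤ Real.exp (-(2*x) * (c*2^n)) := h3
      _ = Real.exp (-(2*x)) ^ (c*2^n) := h2.symm
      _ ≤ (1-x) ^ (c*2^n) := h1
  · exact Real.rpow_le_one (by linarith) (by linarith) hexp

theorem part1 (c : ℝ) (hc : 0 < c) :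
    Tendsto
      (fun n : ℕ =>
        (1 - (1 - (2 * (n : ℝ) - 1) / (((n : ℝ) + 2) * 2 ^ n - 1)) ^ (c * 2 ^ n)) ^ n)
      atTop (𝓝 0) := by
  set r : ℝ := 1 - Real.exp (-(4*c)) with hr
  have he0 : 0 < Real.exp (-(4*c)) := Real.exp_pos _
  have he1 : Real.exp (-(4*c)) ≤ 1 := Real.exp_le_one_iff.mpr (by linarith)
  have hr0 : 0 ≤ r := by simp [hr]; linarith
  have hr1 : r < 1 := by simp [hr]; linarith
  refine squeeze_zero' ?_ ?_ (tendsto_pow_atTop_nhds_zero_of_lt_one hr0 hr1)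
  · filter_upwards [eventually_ge_atTop 2] with n hn
    have := aux_key c hc n hn
    have : (0:ℝ) ≤ 1 - (1 - (2*(n:ℝ)-1)/(((n:ℝ)+2)*2^n-1)) ^ (c*2^n) := by linarith [this.2]
    positivity
  · filter_upwards [eventually_ge_atTop 2] with n hn
    have hk := aux_key c hc n hn
    exact pow_le_pow_left₀ (by linarith [hk.2]) (by linarith [hk.1]) n

/-- For every real `c > 0`, the factor for `j = 1` with its binomial
exponent, `(1 − (1 − (2n−1)/((n+2)·2^n − 1))^{c·2^n})^n`, tends to `0` as `n → ∞`;
consequently the full uncorrected mean-field product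
`∏_{j=0}^{n} (1 − (1 − (2^j − 1 + (n−j)·2^j)/((n+2)·2^n − 1))^{c·2^n})^{C(n,j)}`
tends to `0` as `n → ∞`. -/
theorem uncorrected_meanfield_product_tendsto_zero (c : ℝ) (hc : 0 < c) :
    Tendsto
      (fun n : ℕ =>
        (1 - (1 - (2 * (n : ℝ) - 1) / (((n : ℝ) + 2) * 2 ^ n - 1)) ^ (c * 2 ^ n)) ^ n)
      atTop (𝓝 0) ∧
    Tendsto
      (fun n : ℕ => ∏ j ∈ Finset.range (n + 1),
        (1 - (1 - ((2 : ℝ) ^ j - 1 + ((n : ℝ) - (j : ℝ)) * 2 ^ j) /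
            (((n : ℝ) + 2) * 2 ^ n - 1)) ^ (c * 2 ^ n)) ^ (n.choose j))
      atTop (𝓝 0) := by
  have h1 := part1 c hc
  refine ⟨h1, ?_⟩
  refine squeeze_zero' ?_ ?_ h1
  · filter_upwards [eventually_ge_atTop 1] with n hn
    apply Finset.prod_nonneg
    intro j hj
    have hjn : j ≤ n := Nat.lt_succ_iff.mp (Finset.mem_range.mp hj)
    have hD := aux_D_pos n
    have hjn' : (j:ℝ) ≤ (n:ℝ) := by exact_mod_cast hjn
    have hnum : (0:ℝ) ≤ (2:ℝ)^j - 1 + ((n:ℝ)-(j:ℝ))*2^j := by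
      have h2j : (1:ℝ) ≤ 2^j := one_le_pow₀ (by norm_num)
      nlinarith
    have hy1 : ((2:ℝ)^j - 1 + ((n:ℝ)-(j:ℝ))*2^j) / (((n:ℝ)+2)*2^n - 1) ≤ 1 := by
      rw [div_le_one hD]
      have h2j : (2:ℝ)^j ≤ 2^n := pow_le_pow_right₀ (by norm_num) hjn
      have h2j0 : (0:ℝ) < 2^j := by positivity
      nlinarith
    have hy0 : (0:ℝ) ≤ ((2:ℝ)^j - 1 + ((n:ℝ)-(j:ℝ))*2^j) / (((n:ℝ)+2)*2^n - 1) :=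
      div_nonneg hnum hD.le
    have hb : (1 - ((2:ℝ)^j - 1 + ((n:ℝ)-(j:ℝ))*2^j) / (((n:ℝ)+2)*2^n - 1)) ^ (c*2^n) ≤ 1 :=
      Real.rpow_le_one (by linarith) (by linarith) (by positivity)
    exact pow_nonneg (by linarith) _
  · filter_upwards [eventually_ge_atTop 2] with n hn
    have hD := aux_D_pos n
    have hmem : 1 ∈ Finset.range (n+1) := Finset.mem_range.mpr (by omega)
    set g : ℕ → ℝ := fun j =>
      (1 - (1 - ((2 : ℝ) ^ j - 1 + ((n : ℝ) - (j : ℝ)) * 2 ^ j) /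
            (((n : ℝ) + 2) * 2 ^ n - 1)) ^ (c * 2 ^ n)) ^ (n.choose j) with hg
    have hbound : ∀ j ∈ Finset.range (n+1), 0 ≤ g j ∧ g j ≤ 1 := by
      intro j hj
      have hjn : j ≤ n := Nat.lt_succ_iff.mp (Finset.mem_range.mp hj)
      have hjn' : (j:ℝ) ≤ (n:ℝ) := by exact_mod_cast hjn
      have hnum : (0:ℝ) ≤ (2:ℝ)^j - 1 + ((n:ℝ)-(j:ℝ))*2^j := by
        have h2j : (1:ℝ) ≤ 2^j := one_le_pow₀ (by norm_num)
        nlinarith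
      have hy1 : ((2:ℝ)^j - 1 + ((n:ℝ)-(j:ℝ))*2^j) / (((n:ℝ)+2)*2^n - 1) ≤ 1 := by
        rw [div_le_one hD]
        have h2j : (2:ℝ)^j ≤ 2^n := pow_le_pow_right₀ (by norm_num) hjn
        have h2j0 : (0:ℝ) < 2^j := by positivity
        nlinarith
      have hy0 : (0:ℝ) ≤ ((2:ℝ)^j - 1 + ((n:ℝ)-(j:ℝ))*2^j) / (((n:ℝ)+2)*2^n - 1) :=
        div_nonneg hnum hD.le
      have hr1 : (1 - ((2:ℝ)^j - 1 + ((n:ℝ)-(j:ℝ))*2^j) / (((n:ℝ)+2)*2^n - 1)) ^ (c*2^n) ≤ 1 :=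
        Real.rpow_le_one (by linarith) (by linarith) (by positivity)
      have hr0 : (0:ℝ) ≤ (1 - ((2:ℝ)^j - 1 + ((n:ℝ)-(j:ℝ))*2^j) / (((n:ℝ)+2)*2^n - 1)) ^ (c*2^n) :=
        Real.rpow_nonneg (by linarith) _
      constructor
      · apply pow_nonneg; linarith
      · exact pow_le_one₀ (by linarith) (by linarith)
    have hsplit : ∏ j ∈ Finset.range (n+1), g j
        = g 1 * ∏ j ∈ (Finset.range (n+1)).erase 1, g j :=
      (Finset.mul_prod_erase _ g hmem).symm
    have hrest : ∏ j ∈ (Finset.range (n+1)).erase 1, g j ≤ 1 := by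
      apply Finset.prod_le_one
      · intro j hj; exact (hbound j (Finset.mem_of_mem_erase hj)).1
      · intro j hj; exact (hbound j (Finset.mem_of_mem_erase hj)).2
    have hg1 : g 1 = (1 - (1 - (2 * (n : ℝ) - 1) / (((n : ℝ) + 2) * 2 ^ n - 1)) ^ (c * 2 ^ n)) ^ n := by
      rw [hg]
      simp only [Nat.choose_one_right]
      norm_num
      ring_nf
    calc ∏ j ∈ Finset.range (n+1), g j
        = g 1 * ∏ j ∈ (Finset.range (n+1)).erase 1, g j := hsplit
      _ ≤ g 1 * 1 := by
          apply mul_le_mul_of_nonneg_left hrest (hbound 1 hmem).1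
      _ = g 1 := mul_one _
      _ = _ := hg1
end

section
/- Fix integers n ≥ k ≥ 2 and a real A. Suppose real numbers x_{i,t}, for 2 ≤ i ≤ k+1 and 0 ≤ t ≤ n, satisfy: x_{k+1,t} = 0 for all t; x_{i,n} = A·i·C(n,i) for 2 ≤ i ≤ k; and the recurrence x_{i,t−1} = x_{i,t}·(1 − i/t) + x_{i+1,t}·(i/t) for all 2 ≤ i ≤ k and 1 ≤ t ≤ n. Then x_{i,t} = A·i·C(t,i)·S^{n−t}_{k−i} for all 2 ≤ i ≤ k and 0 ≤ t ≤ n. -/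
/-!
Backward induction on `t` from the boundary values at `t = n`: the closed form satisfies the same
recurrence because `C(t, i) (1 - i/t) = C(t-1, i)`, `(i+1) C(t, i+1) (i/t) = i C(t-1, i)`, and the
partial row sums obey Pascal's rule `S^{m+1}_{j+1} = S^m_{j+1} + S^m_j`.
-/

open scoped BigOperators

/-- `S^i_j = C(i,0) + C(i,1) + ⋯ + C(i,j)` (with `C(i,j) = 0` for `i < j`). -/
def Scoef (i j : ℕ) : ℕ := ∑ l ∈ Finset.range (j + 1), i.choose l

lemma Scoef_zero_left (j : ℕ) : Scoef 0 j = 1 := by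
  simp [Scoef, Finset.sum_range_succ', Nat.choose_zero_succ]

lemma Scoef_zero_right (m : ℕ) : Scoef m 0 = 1 := by
  simp [Scoef]

lemma Scoef_succ_succ (m j : ℕ) :
    Scoef (m + 1) (j + 1) = Scoef m (j + 1) + Scoef m j := by
  rw [Scoef, Scoef, Finset.sum_range_succ', Finset.sum_range_succ' (m.choose ·)]
  simp only [Nat.choose_succ_succ, Finset.sum_add_distrib, Nat.choose_zero_right, Scoef]
  ring

lemma cast_choose_succ_mul_one_sub_div (s i : ℕ) :
    ((s + 1).choose i : ℝ) * (1 - i / (s + 1)) = s.choose i := by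
  rcases i with _ | j
  · simp
  have hpascal : ((s + 1).choose (j + 1) : ℝ) = s.choose j + s.choose (j + 1) := by
    exact_mod_cast Nat.choose_succ_succ s j
  have habsorb : ((s : ℝ) + 1) * s.choose j = (s + 1).choose (j + 1) * (j + 1) := by
    exact_mod_cast Nat.add_one_mul_choose_eq s j
  push_cast
  field_simp
  linear_combination ((s : ℝ) + 1) * hpascal + habsorb

lemma cast_succ_mul_choose_succ_mul_div (s i : ℕ) :
    ((i : ℝ) + 1) * ((s + 1).choose (i + 1) : ℝ) * (i / (s + 1)) = i * s.choose i := by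
  have habsorb : ((s : ℝ) + 1) * s.choose i = (s + 1).choose (i + 1) * (i + 1) := by
    exact_mod_cast Nat.add_one_mul_choose_eq s i
  field_simp
  linear_combination -(i : ℝ) * habsorb

theorem meanfield_recurrence_positive_general
    (n k : ℕ) (A : ℝ) (x : ℕ → ℕ → ℝ)
    (htop : ∀ t ≤ n, x (k + 1) t = 0)
    (hinit : ∀ i, 2 ≤ i → i ≤ k → x i n = A * i * (n.choose i : ℝ))
    (hrec : ∀ i, 2 ≤ i → i ≤ k → ∀ t, 1 ≤ t → t ≤ n →
      x i (t - 1) = x i t * (1 - (i : ℝ) / (t : ℝ)) + x (i + 1) t * ((i : ℝ) / (t : ℝ))) :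
    ∀ i, 2 ≤ i → i ≤ k → ∀ t ≤ n,
      x i t = A * i * (t.choose i : ℝ) * (Scoef (n - t) (k - i) : ℝ) := by
  intro i hi hik t ht
  induction ht using Nat.decreasingInduction generalizing i with
  | self => simpa [Scoef_zero_left] using hinit i hi hik
  | of_succ t htn ih =>
    have hstep := hrec i hi hik (t + 1) (by omega) htn
    obtain ⟨m, hm⟩ : ∃ m, n - t = m + 1 := ⟨n - (t + 1), by omega⟩
    rw [Nat.add_sub_cancel, Nat.cast_succ] at hstep
    rw [hstep, hm]
    simp only [show n - (t + 1) = m by omega] at ih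
    rcases Nat.lt_or_ge i k with hlt | hge
    · obtain ⟨j, hj⟩ : ∃ j, k - i = j + 1 := ⟨k - (i + 1), by omega⟩
      rw [ih i hi hik, ih (i + 1) (by omega) hlt, hj, show k - (i + 1) = j by omega,
        Scoef_succ_succ]
      push_cast
      linear_combination
        (A * i * Scoef m (j + 1)) * cast_choose_succ_mul_one_sub_div t i
          + A * Scoef m j * cast_succ_mul_choose_succ_mul_div t i
    · obtain rfl : i = k := by omega
      rw [ih i hi hik, htop (t + 1) htn, Nat.sub_self, Scoef_zero_right, Scoef_zero_right]
      push_cast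
      linear_combination (A * i) * cast_choose_succ_mul_one_sub_div t i

/-- Fix `n ≥ k ≥ 2` and `A : ℝ`.  If the reals `x i t`
(for `2 ≤ i ≤ k+1`, `0 ≤ t ≤ n`) satisfy `x (k+1) t = 0`, `x i n = A·i·C(n,i)` for
`2 ≤ i ≤ k`, and the recurrence `x i (t−1) = x i t·(1 − i/t) + x (i+1) t·(i/t)` for
`2 ≤ i ≤ k`, `1 ≤ t ≤ n`, then `x i t = A·i·C(t,i)·S^{n−t}_{k−i}` for all `2 ≤ i ≤ k`,
`0 ≤ t ≤ n`. -/
theorem meanfield_recurrence_positive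
    (n k : ℕ) (hk : 2 ≤ k) (hkn : k ≤ n) (A : ℝ) (x : ℕ → ℕ → ℝ)
    (htop : ∀ t ≤ n, x (k + 1) t = 0)
    (hinit : ∀ i, 2 ≤ i → i ≤ k → x i n = A * i * (n.choose i : ℝ))
    (hrec : ∀ i, 2 ≤ i → i ≤ k → ∀ t, 1 ≤ t → t ≤ n →
      x i (t - 1) = x i t * (1 - (i : ℝ) / (t : ℝ)) + x (i + 1) t * ((i : ℝ) / (t : ℝ))) :
    ∀ i, 2 ≤ i → i ≤ k → ∀ t ≤ n,
      x i t = A * i * (t.choose i : ℝ) * (Scoef (n - t) (k - i) : ℝ) :=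
  meanfield_recurrence_positive_general n k A x htop hinit hrec
end

section
/- Let λ > 0 and let (ξ_i)_{i≥1} be independent, identically distributed Poisson random variables with mean λ. Define the queuing chain Q_0 = 1 and Q_{i+1} = (Q_i ∸ 1) + ξ_{i+1} for i ≥ 0. Then the probability that Q_i = 0 for some i ≥ 0 equals 1 if λ ≤ 1, and equals the unique ρ ∈ (0,1) satisfying ρ = e^{λ(ρ−1)} (equivalently, ln ρ/(ρ−1) = λ) if λ > 1. -/
set_option linter.unusedSectionVars false

open MeasureTheory ProbabilityTheory

/-- The queuing chain `Q₀ = 1`, `Q_{i+1} = (Q_i ∸ 1) + ξ_i(ω)`, where `ξ_i` supplies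
the arrivals used in the step from `Q_i` to `Q_{i+1}`. -/
def Qchain {Ω : Type*} (ξ : ℕ → Ω → ℕ) (ω : Ω) : ℕ → ℕ
  | 0 => 1
  | i + 1 => (Qchain ξ ω i - 1) + ξ i ω

namespace QueueAux

open Finset Filter Topology

variable {Ω : Type*}

/-- Partial sums of arrivals, starting at index `s`. -/
def W (ξ : ℕ → Ω → ℕ) (s n : ℕ) (ω : Ω) : ℕ := ∑ j ∈ Finset.range n, ξ (s + j) ω

lemma W_zero (ξ : ℕ → Ω → ℕ) (s : ℕ) (ω : Ω) : W ξ s 0 ω = 0 := by simp [W]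

lemma W_succ (ξ : ℕ → Ω → ℕ) (s n : ℕ) (ω : Ω) :
    W ξ s (n + 1) ω = W ξ s n ω + ξ (s + n) ω := Finset.sum_range_succ _ _

lemma W_add (ξ : ℕ → Ω → ℕ) (s m n : ℕ) (ω : Ω) :
    W ξ s (m + n) ω = W ξ s m ω + W ξ (s + m) n ω := by
  induction n with
  | zero => simp [W]
  | succ n ih =>
      have h1 : m + (n + 1) = (m + n) + 1 := by omega
      rw [h1, W_succ, ih, W_succ]
      have h2 : s + (m + n) = s + m + n := by omega
      rw [h2]; omega

lemma W_mono (ξ : ℕ → Ω → ℕ) (s : ℕ) (ω : Ω) {n m : ℕ} (h : n ≤ m) :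
    W ξ s n ω ≤ W ξ s m ω := by
  have h1 : m = n + (m - n) := by omega
  rw [h1, W_add]; omega

/-- Event: starting from level `k` and using arrivals `ξ s, ξ (s+1), …`, the queue
ever reaches `0`. -/
def Aev (ξ : ℕ → Ω → ℕ) (s k : ℕ) : Set Ω := {ω | ∃ n, W ξ s n ω + k ≤ n}

/-- Truncated version of `Aev`. -/
def Fev (ξ : ℕ → Ω → ℕ) (s k N : ℕ) : Set Ω := {ω | ∃ n ≤ N, W ξ s n ω + k ≤ n}

/-- First passage (by one level) exactly at time `m`. -/
def Tev (ξ : ℕ → Ω → ℕ) (s m : ℕ) : Set Ω :=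
  {ω | W ξ s m ω + 1 ≤ m ∧ ∀ j < m, j < W ξ s j ω + 1}

lemma qchain_add (ξ : ℕ → Ω → ℕ) (ω : Ω) (i : ℕ)
    (h : ∀ n ≤ i, n < W ξ 0 n ω + 1) :
    Qchain ξ ω i + i = 1 + W ξ 0 i ω := by
  induction i with
  | zero => simp [Qchain, W]
  | succ i ih =>
      have hi := ih (fun n hn => h n (hn.trans (Nat.le_succ i)))
      have hWi : i ≤ W ξ 0 i ω := by have := h i (Nat.le_succ i); omega
      have hW1 : W ξ 0 (i + 1) ω = W ξ 0 i ω + ξ i ω := by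
        have := W_succ ξ 0 i ω; simpa using this
      show (Qchain ξ ω i - 1) + ξ i ω + (i + 1) = 1 + W ξ 0 (i + 1) ω
      omega

lemma qchain_event (ξ : ℕ → Ω → ℕ) (ω : Ω) :
    (∃ i, Qchain ξ ω i = 0) ↔ ω ∈ Aev ξ 0 1 := by
  constructor
  · rintro ⟨i, hi⟩
    by_contra hc
    have h : ∀ n, n < W ξ 0 n ω + 1 := by
      intro n
      by_contra hn
      exact hc ⟨n, by omega⟩
    have h2 := h i
    have := qchain_add ξ ω i (fun n _ => h n)
    omega
  · rintro ⟨n, hn⟩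
    classical
    have hex : ∃ n, W ξ 0 n ω + 1 ≤ n := ⟨n, hn⟩
    have hPm : W ξ 0 (Nat.find hex) ω + 1 ≤ Nat.find hex := Nat.find_spec hex
    have hmin : ∀ j < Nat.find hex, ¬ (W ξ 0 j ω + 1 ≤ j) := fun j hj => Nat.find_min hex hj
    have hm0 : Nat.find hex ≠ 0 := by
      intro h0
      rw [h0] at hPm
      have := W_zero ξ 0 ω
      omega
    obtain ⟨m', hm'⟩ : ∃ m', Nat.find hex = m' + 1 := ⟨Nat.find hex - 1, by omega⟩
    rw [hm'] at hPm hmin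
    have hprev : ∀ n ≤ m', n < W ξ 0 n ω + 1 := by
      intro n hn
      have := hmin n (by omega)
      omega
    have hq := qchain_add ξ ω m' hprev
    have hWm' : m' ≤ W ξ 0 m' ω := by have := hprev m' le_rfl; omega
    have hW1 : W ξ 0 (m' + 1) ω = W ξ 0 m' ω + ξ m' ω := by
      have := W_succ ξ 0 m' ω; simpa using this
    refine ⟨m' + 1, ?_⟩
    show (Qchain ξ ω m' - 1) + ξ m' ω = 0
    omega

end QueueAux
section PartB
namespace QueueAux
variable {Ω : Type*}

lemma Aev_zero (ξ : ℕ → Ω → ℕ) (s : ℕ) : Aev ξ s 0 = Set.univ := by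
  ext ω; simp only [Aev, Set.mem_setOf_eq, Set.mem_univ, iff_true]
  exact ⟨0, by simp [W_zero]⟩

lemma Fev_mono (ξ : ℕ → Ω → ℕ) (s k : ℕ) : Monotone (Fev ξ s k) := by
  intro N M h ω ⟨n, hn, hW⟩
  exact ⟨n, hn.trans h, hW⟩

lemma Aev_eq_iUnion_Fev (ξ : ℕ → Ω → ℕ) (s k : ℕ) :
    Aev ξ s k = ⋃ N, Fev ξ s k N := by
  ext ω
  simp only [Aev, Fev, Set.mem_setOf_eq, Set.mem_iUnion]
  exact ⟨fun ⟨n, hn⟩ => ⟨n, n, le_rfl, hn⟩, fun ⟨N, n, _, hn⟩ => ⟨n, hn⟩⟩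

lemma Aev_antitone (ξ : ℕ → Ω → ℕ) (s : ℕ) : Antitone (fun k => Aev ξ s k) := by
  intro k k' h ω ⟨n, hn⟩
  exact ⟨n, by omega⟩

lemma Tev_disjoint (ξ : ℕ → Ω → ℕ) (s : ℕ) :
    Pairwise (Function.onFun Disjoint (Tev ξ s)) := by
  have key : ∀ m m', m < m' → Disjoint (Tev ξ s m) (Tev ξ s m') := by
    intro m m' h
    rw [Set.disjoint_left]
    rintro ω ⟨h1, _⟩ ⟨_, h2'⟩
    have := h2' m h
    omega
  intro m m' hne
  rcases lt_or_gt_of_ne hne with h | h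
  · exact key _ _ h
  · exact (key _ _ h).symm

lemma Tev_sum (ξ : ℕ → Ω → ℕ) (s m : ℕ) {ω : Ω} (hω : ω ∈ Tev ξ s m) :
    W ξ s m ω + 1 = m := by
  obtain ⟨h1, h2⟩ := hω
  have hm0 : m ≠ 0 := by
    intro h0; rw [h0] at h1; omega
  obtain ⟨m', rfl⟩ : ∃ m', m = m' + 1 := ⟨m - 1, by omega⟩
  have h3 := h2 m' (by omega)
  have h4 : W ξ s m' ω ≤ W ξ s (m' + 1) ω := W_mono ξ s ω (by omega)
  omega

lemma Aev_one_eq_iUnion_Tev (ξ : ℕ → Ω → ℕ) (s : ℕ) :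
    Aev ξ s 1 = ⋃ m, Tev ξ s m := by
  classical
  ext ω
  simp only [Aev, Set.mem_setOf_eq, Set.mem_iUnion]
  constructor
  · rintro ⟨n, hn⟩
    have hex : ∃ n, W ξ s n ω + 1 ≤ n := ⟨n, hn⟩
    refine ⟨Nat.find hex, Nat.find_spec hex, fun j hj => ?_⟩
    have := Nat.find_min hex hj
    omega
  · rintro ⟨m, h1, _⟩
    exact ⟨m, h1⟩

lemma Aev_succ_decomp (ξ : ℕ → Ω → ℕ) (s k : ℕ) :
    Aev ξ s (k + 1) = ⋃ m, (Tev ξ s m ∩ Aev ξ (s + m) k) := by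
  classical
  ext ω
  simp only [Aev, Set.mem_setOf_eq, Set.mem_iUnion, Set.mem_inter_iff]
  constructor
  · rintro ⟨n, hn⟩
    have hex : ∃ n, W ξ s n ω + 1 ≤ n := ⟨n, by omega⟩
    have hT : ω ∈ Tev ξ s (Nat.find hex) := by
      refine ⟨Nat.find_spec hex, fun j hj => ?_⟩
      have := Nat.find_min hex hj
      omega
    have hWs := Tev_sum ξ s (Nat.find hex) hT
    have hle : Nat.find hex ≤ n := Nat.find_min' hex (by omega)
    refine ⟨Nat.find hex, hT, n - Nat.find hex, ?_⟩
    have hsplit := W_add ξ s (Nat.find hex) (n - Nat.find hex) ω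
    rw [show Nat.find hex + (n - Nat.find hex) = n by omega] at hsplit
    omega
  · rintro ⟨m, hT, n, hn⟩
    have hWs := Tev_sum ξ s m hT
    refine ⟨m + n, ?_⟩
    have hsplit := W_add ξ s m n ω
    omega

lemma Aev_succ_decomp_disjoint (ξ : ℕ → Ω → ℕ) (s k : ℕ) :
    Pairwise (Function.onFun Disjoint (fun m => Tev ξ s m ∩ Aev ξ (s + m) k)) := by
  intro m m' hne
  exact (Tev_disjoint ξ s hne).mono Set.inter_subset_left Set.inter_subset_left

lemma Aev_first_step (ξ : ℕ → Ω → ℕ) (s : ℕ) :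
    Aev ξ s 1 = ⋃ k, (ξ s ⁻¹' {k} ∩ Aev ξ (s + 1) k) := by
  ext ω
  simp only [Aev, Set.mem_setOf_eq, Set.mem_iUnion, Set.mem_inter_iff, Set.mem_preimage,
    Set.mem_singleton_iff]
  constructor
  · rintro ⟨n, hn⟩
    have hn0 : n ≠ 0 := by
      intro h0; rw [h0] at hn; have := W_zero ξ s ω; omega
    refine ⟨ξ s ω, rfl, n - 1, ?_⟩
    have hsplit := W_add ξ s 1 (n - 1) ω
    rw [show 1 + (n - 1) = n by omega] at hsplit
    have hW1 : W ξ s 1 ω = ξ s ω := by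
      have := W_succ ξ s 0 ω; have := W_zero ξ s ω; simp at *; omega
    omega
  · rintro ⟨k, hk, n, hn⟩
    refine ⟨1 + n, ?_⟩
    have hsplit := W_add ξ s 1 n ω
    have hW1 : W ξ s 1 ω = ξ s ω := by
      have := W_succ ξ s 0 ω; have := W_zero ξ s ω; simp at *; omega
    omega

lemma Aev_first_step_disjoint (ξ : ℕ → Ω → ℕ) (s : ℕ) :
    Pairwise (Function.onFun Disjoint (fun k => ξ s ⁻¹' {k} ∩ Aev ξ (s + 1) k)) := by
  intro k k' hne
  refine Set.disjoint_left.mpr ?_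
  rintro ω ⟨hk, _⟩ ⟨hk', _⟩
  exact hne (by simp only [Set.mem_preimage, Set.mem_singleton_iff] at hk hk'; omega)

end QueueAux
end PartB
section PartC
namespace QueueAux
open Finset
variable {Ω : Type*} [MeasurableSpace Ω]

/-- The prefix of length `N` of the arrivals starting at `s`. -/
def prf (ξ : ℕ → Ω → ℕ) (s N : ℕ) (ω : Ω) : Fin N → ℕ := fun j => ξ (s + j) ω

lemma measurable_prf {ξ : ℕ → Ω → ℕ} (hmeas : ∀ i, Measurable (ξ i)) (s N : ℕ) :
    Measurable (prf ξ s N) :=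
  measurable_pi_iff.mpr fun _ => hmeas _

lemma measurableSet_fin_pi {N : ℕ} (P : Set (Fin N → ℕ)) : MeasurableSet P :=
  MeasurableSet.of_discrete

/-- Partial sums of a finite prefix. -/
def asum {N : ℕ} (a : Fin N → ℕ) (n : ℕ) : ℕ :=
  ∑ j ∈ Finset.univ.filter (fun j : Fin N => (j : ℕ) < n), a j

lemma W_eq_asum (ξ : ℕ → Ω → ℕ) (s : ℕ) {n N : ℕ} (hn : n ≤ N) (ω : Ω) :
    W ξ s n ω = asum (prf ξ s N ω) n := by
  unfold W asum prf
  rw [Finset.sum_bij' (i := fun (j : Fin N) _ => (j : ℕ))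
    (j := fun (j : ℕ) hj => (⟨j, lt_of_lt_of_le (Finset.mem_range.mp hj) hn⟩ : Fin N))]
  · intro a ha; simp only [Finset.mem_filter, Finset.mem_univ, true_and] at ha
    exact Finset.mem_range.mpr ha
  · intro a ha; simp only [Finset.mem_filter, Finset.mem_univ, true_and]
    exact Finset.mem_range.mp ha
  · intro a ha; rfl
  · intro a ha; rfl
  · intro a ha; rfl

/-- The `Fin N` predicate corresponding to `Fev`. -/
def FP (k N : ℕ) : Set (Fin N → ℕ) := {a | ∃ n ≤ N, asum a n + k ≤ n}

/-- The `Fin m` predicate corresponding to `Tev`. -/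
def TP (m : ℕ) : Set (Fin m → ℕ) := {a | asum a m + 1 ≤ m ∧ ∀ j < m, j < asum a j + 1}

lemma Fev_eq_preimage (ξ : ℕ → Ω → ℕ) (s k N : ℕ) :
    Fev ξ s k N = prf ξ s N ⁻¹' (FP k N) := by
  ext ω
  simp only [Fev, FP, Set.mem_setOf_eq, Set.mem_preimage]
  constructor
  · rintro ⟨n, hn, hW⟩
    exact ⟨n, hn, by rw [← W_eq_asum ξ s hn ω]; exact hW⟩
  · rintro ⟨n, hn, hW⟩
    exact ⟨n, hn, by rw [W_eq_asum ξ s hn ω]; exact hW⟩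

lemma Tev_eq_preimage (ξ : ℕ → Ω → ℕ) (s m : ℕ) :
    Tev ξ s m = prf ξ s m ⁻¹' (TP m) := by
  ext ω
  simp only [Tev, TP, Set.mem_setOf_eq, Set.mem_preimage]
  constructor
  · rintro ⟨h1, h2⟩
    refine ⟨by rw [← W_eq_asum ξ s le_rfl ω]; exact h1, fun j hj => ?_⟩
    rw [← W_eq_asum ξ s (le_of_lt hj) ω]; exact h2 j hj
  · rintro ⟨h1, h2⟩
    refine ⟨by rw [W_eq_asum ξ s le_rfl ω]; exact h1, fun j hj => ?_⟩
    rw [W_eq_asum ξ s (le_of_lt hj) ω]; exact h2 j hj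

lemma singleton_eq_preimage (ξ : ℕ → Ω → ℕ) (s k : ℕ) :
    ξ s ⁻¹' {k} = prf ξ s 1 ⁻¹' {a | a 0 = k} := by
  ext ω
  simp only [Set.mem_preimage, Set.mem_singleton_iff, Set.mem_setOf_eq, prf]
  norm_num

lemma measurableSet_Fev {ξ : ℕ → Ω → ℕ} (hmeas : ∀ i, Measurable (ξ i)) (s k N : ℕ) :
    MeasurableSet (Fev ξ s k N) := by
  rw [Fev_eq_preimage]
  exact measurable_prf hmeas s N (measurableSet_fin_pi _)

lemma measurableSet_Tev {ξ : ℕ → Ω → ℕ} (hmeas : ∀ i, Measurable (ξ i)) (s m : ℕ) :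
    MeasurableSet (Tev ξ s m) := by
  rw [Tev_eq_preimage]
  exact measurable_prf hmeas s m (measurableSet_fin_pi _)

lemma measurableSet_Aev {ξ : ℕ → Ω → ℕ} (hmeas : ∀ i, Measurable (ξ i)) (s k : ℕ) :
    MeasurableSet (Aev ξ s k) := by
  rw [Aev_eq_iUnion_Fev]
  exact MeasurableSet.iUnion fun N => measurableSet_Fev hmeas s k N

end QueueAux
end PartC
section PartD
namespace QueueAux
open Finset
variable {Ω : Type*} [MeasurableSpace Ω] {μ : Measure Ω} {ξ : ℕ → Ω → ℕ} {p : ℕ → ENNReal}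

lemma meas_cyl (hindep : iIndepFun ξ μ)
    (hsingle : ∀ i k, μ (ξ i ⁻¹' {k}) = p k)
    (s N : ℕ) (a : Fin N → ℕ) :
    μ (prf ξ s N ⁻¹' {a}) = ∏ j : Fin N, p (a j) := by
  classical
  set sets : ℕ → Set ℕ := fun i => {b : ℕ | ∀ j : Fin N, i = s + (j : ℕ) → b = a j} with hsets
  have hmeasSets : ∀ i, i ∈ Finset.Ico s (s + N) → MeasurableSet (sets i) :=
    fun i _ => MeasurableSet.of_discrete
  have hkey := hindep.measure_inter_preimage_eq_mul (Finset.Ico s (s + N)) hmeasSets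
  have hset : (⋂ i ∈ Finset.Ico s (s + N), ξ i ⁻¹' sets i) = prf ξ s N ⁻¹' {a} := by
    ext ω
    simp only [Set.mem_iInter, Set.mem_preimage, Set.mem_singleton_iff, Finset.mem_Ico,
      hsets, Set.mem_setOf_eq]
    constructor
    · intro h
      funext j
      exact h (s + j) ⟨Nat.le_add_right _ _, by omega⟩ j rfl
    · intro h i hi j hij
      subst hij
      rw [← h]
      rfl
  have hprod : ∏ i ∈ Finset.Ico s (s + N), μ (ξ i ⁻¹' sets i) = ∏ j : Fin N, p (a j) := by
    rw [Finset.prod_Ico_eq_prod_range]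
    have hNN : s + N - s = N := by omega
    rw [hNN]
    set f : ℕ → ENNReal := fun t => if h : t < N then p (a ⟨t, h⟩) else 1 with hf
    have h2 : ∏ j : Fin N, p (a j) = ∏ t ∈ Finset.range N, f t := by
      rw [← Fin.prod_univ_eq_prod_range f]
      refine Finset.prod_congr rfl fun j _ => ?_
      simp only [hf, j.isLt, dif_pos, Fin.eta]
    rw [h2]
    refine Finset.prod_congr rfl fun t ht => ?_
    have htN : t < N := Finset.mem_range.mp ht
    have hsett : sets (s + t) = {a ⟨t, htN⟩} := by
      ext b
      simp only [hsets, Set.mem_setOf_eq, Set.mem_singleton_iff]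
      constructor
      · intro h
        exact h ⟨t, htN⟩ rfl
      · intro hb j hj
        have hjt : (j : ℕ) = t := by omega
        have : j = ⟨t, htN⟩ := Fin.ext hjt
        rw [this]
        exact hb
    rw [hsett, hsingle (s + t)]
    simp only [hf, htN, dif_pos]
  rw [← hset, hkey, hprod]

lemma meas_cylE (hmeas : ∀ i, Measurable (ξ i))
    (hindep : iIndepFun ξ μ)
    (hsingle : ∀ i k, μ (ξ i ⁻¹' {k}) = p k)
    (s N : ℕ) (P : Set (Fin N → ℕ)) :
    μ (prf ξ s N ⁻¹' P) = ∑' a : P, ∏ j : Fin N, p ((a : Fin N → ℕ) j) := by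
  classical
  have hdecomp : prf ξ s N ⁻¹' P = ⋃ a : P, prf ξ s N ⁻¹' {(a : Fin N → ℕ)} := by
    ext ω
    simp only [Set.mem_preimage, Set.mem_iUnion, Set.mem_singleton_iff]
    exact ⟨fun h => ⟨⟨_, h⟩, rfl⟩, fun ⟨a, ha⟩ => ha ▸ a.2⟩
  rw [hdecomp, measure_iUnion ?_ ?_]
  · exact tsum_congr fun a => meas_cyl hindep hsingle s N a
  · intro a b hab
    refine Set.disjoint_left.mpr fun ω ha hb => ?_
    simp only [Set.mem_preimage, Set.mem_singleton_iff] at ha hb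
    exact hab (Subtype.ext (ha ▸ hb ▸ rfl))
  · exact fun a => (measurable_prf hmeas s N) (measurableSet_fin_pi _)

lemma meas_cylE_inv (hmeas : ∀ i, Measurable (ξ i))
    (hindep : iIndepFun ξ μ)
    (hsingle : ∀ i k, μ (ξ i ⁻¹' {k}) = p k)
    (s t N : ℕ) (P : Set (Fin N → ℕ)) :
    μ (prf ξ s N ⁻¹' P) = μ (prf ξ t N ⁻¹' P) := by
  rw [meas_cylE hmeas hindep hsingle s N P, meas_cylE hmeas hindep hsingle t N P]

lemma meas_inter_prf (hmeas : ∀ i, Measurable (ξ i))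
    (hindep : iIndepFun ξ μ)
    (s N M : ℕ) (P : Set (Fin N → ℕ)) (Q : Set (Fin M → ℕ)) :
    μ (prf ξ s N ⁻¹' P ∩ prf ξ (s + N) M ⁻¹' Q)
      = μ (prf ξ s N ⁻¹' P) * μ (prf ξ (s + N) M ⁻¹' Q) := by
  classical
  have hST : Disjoint (Finset.Ico s (s + N)) (Finset.Ico (s + N) (s + N + M)) :=
    Finset.Ico_disjoint_Ico_consecutive s (s + N) (s + N + M)
  have h1 := hindep.indepFun_finset _ _ hST hmeas
  set r1 : ((i : Finset.Ico s (s + N)) → ℕ) → (Fin N → ℕ) :=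
    fun v j => v ⟨s + j, by simp only [Finset.mem_Ico]; omega⟩ with hr1
  set r2 : ((i : Finset.Ico (s + N) (s + N + M)) → ℕ) → (Fin M → ℕ) :=
    fun v j => v ⟨s + N + j, by simp only [Finset.mem_Ico]; omega⟩ with hr2
  have hm1 : Measurable r1 := measurable_pi_iff.mpr fun j => measurable_pi_apply _
  have hm2 : Measurable r2 := measurable_pi_iff.mpr fun j => measurable_pi_apply _
  have h2 := h1.comp hm1 hm2
  have e1 : r1 ∘ (fun ω (i : Finset.Ico s (s + N)) => ξ i ω) = prf ξ s N := rfl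
  have e2 : r2 ∘ (fun ω (i : Finset.Ico (s + N) (s + N + M)) => ξ i ω) = prf ξ (s + N) M := rfl
  rw [e1, e2] at h2
  exact h2.measure_inter_preimage_eq_mul _ _ (measurableSet_fin_pi P) (measurableSet_fin_pi Q)

lemma meas_inter_Aev (hmeas : ∀ i, Measurable (ξ i))
    (hindep : iIndepFun ξ μ)
    (s N k : ℕ) (P : Set (Fin N → ℕ)) :
    μ (prf ξ s N ⁻¹' P ∩ Aev ξ (s + N) k)
      = μ (prf ξ s N ⁻¹' P) * μ (Aev ξ (s + N) k) := by
  rw [Aev_eq_iUnion_Fev, Set.inter_iUnion]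
  have hmono1 : Monotone (fun M => prf ξ s N ⁻¹' P ∩ Fev ξ (s + N) k M) :=
    fun i j h => Set.inter_subset_inter_right _ (Fev_mono ξ _ _ h)
  rw [hmono1.measure_iUnion, (Fev_mono ξ (s + N) k).measure_iUnion, ENNReal.mul_iSup]
  refine iSup_congr fun M => ?_
  rw [Fev_eq_preimage]
  exact meas_inter_prf hmeas hindep s N M P (FP k M)

lemma meas_Aev_inv (hmeas : ∀ i, Measurable (ξ i))
    (hindep : iIndepFun ξ μ)
    (hsingle : ∀ i k, μ (ξ i ⁻¹' {k}) = p k)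
    (s t k : ℕ) :
    μ (Aev ξ s k) = μ (Aev ξ t k) := by
  rw [Aev_eq_iUnion_Fev, Aev_eq_iUnion_Fev, (Fev_mono ξ s k).measure_iUnion,
    (Fev_mono ξ t k).measure_iUnion]
  refine iSup_congr fun N => ?_
  rw [Fev_eq_preimage, Fev_eq_preimage]
  exact meas_cylE_inv hmeas hindep hsingle s t N (FP k N)

lemma meas_Aev_pow (hmeas : ∀ i, Measurable (ξ i))
    (hindep : iIndepFun ξ μ)
    (hsingle : ∀ i k, μ (ξ i ⁻¹' {k}) = p k) [IsProbabilityMeasure μ] :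
    ∀ k s, μ (Aev ξ s k) = (μ (Aev ξ 0 1)) ^ k := by
  intro k
  induction k with
  | zero => intro s; simp [Aev_zero]
  | succ k ih =>
      intro s
      rw [Aev_succ_decomp,
        measure_iUnion (Aev_succ_decomp_disjoint ξ s k)
          (fun m => (measurableSet_Tev hmeas s m).inter (measurableSet_Aev hmeas _ k))]
      have hterm : ∀ m, μ (Tev ξ s m ∩ Aev ξ (s + m) k)
          = μ (Tev ξ s m) * (μ (Aev ξ 0 1)) ^ k := by
        intro m
        rw [Tev_eq_preimage, meas_inter_Aev hmeas hindep s m k (TP m), ih (s + m),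
          ← Tev_eq_preimage]
      rw [tsum_congr hterm, ENNReal.tsum_mul_right,
        ← measure_iUnion (Tev_disjoint ξ s) (fun m => measurableSet_Tev hmeas s m),
        ← Aev_one_eq_iUnion_Tev, meas_Aev_inv hmeas hindep hsingle s 0 1, pow_succ,
        mul_comm]

lemma meas_fixed_point (hmeas : ∀ i, Measurable (ξ i))
    (hindep : iIndepFun ξ μ)
    (hsingle : ∀ i k, μ (ξ i ⁻¹' {k}) = p k) [IsProbabilityMeasure μ] :
    μ (Aev ξ 0 1) = ∑' k, p k * (μ (Aev ξ 0 1)) ^ k := by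
  conv_lhs => rw [Aev_first_step ξ 0]
  rw [measure_iUnion (Aev_first_step_disjoint ξ 0)
    (fun k => ((hmeas 0) (measurableSet_singleton k)).inter (measurableSet_Aev hmeas _ k))]
  refine tsum_congr fun k => ?_
  rw [singleton_eq_preimage,
    show (0 : ℕ) + 1 = 1 from rfl,
    meas_inter_Aev hmeas hindep 0 1 k {a | a 0 = k},
    ← singleton_eq_preimage, hsingle 0 k, meas_Aev_pow hmeas hindep hsingle k 1]

end QueueAux
end PartD
section PartE
namespace QueueAux
open Real ProbabilityTheory Nat

lemma exp_tsum (x : ℝ) : ∑' n : ℕ, x ^ n / n ! = Real.exp x := by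
  rw [Real.exp_eq_exp_ℝ, NormedSpace.exp_eq_tsum_div]

lemma poisson_real_eq {lam : ℝ} (hlam : 0 ≤ lam) (k : ℕ) :
    poissonPMFReal lam.toNNReal k = Real.exp (-lam) * lam ^ k / k ! := by
  unfold poissonPMFReal
  rw [Real.coe_toNNReal _ hlam]

lemma poissonPMF_apply (r : NNReal) (k : ℕ) :
    poissonPMF r k = ENNReal.ofReal (poissonPMFReal r k) := rfl

lemma poisson_mean {lam : ℝ} (hlam : 0 < lam) :
    Summable (fun k : ℕ => (k : ℝ) * (Real.exp (-lam) * lam ^ k / k !)) ∧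
    ∑' k : ℕ, (k : ℝ) * (Real.exp (-lam) * lam ^ k / k !) = lam := by
  set g := fun k : ℕ => (k : ℝ) * (Real.exp (-lam) * lam ^ k / k !) with hg
  have hshift : ∀ k : ℕ, g (k + 1) = (lam * Real.exp (-lam)) * (lam ^ k / k !) := by
    intro k
    have hfact : ((Nat.factorial (k+1) : ℕ) : ℝ) = (k+1) * (Nat.factorial k : ℕ) := by
      rw [Nat.factorial_succ]; push_cast; ring
    have hne : ((Nat.factorial k : ℕ) : ℝ) ≠ 0 := Nat.cast_ne_zero.mpr (Nat.factorial_ne_zero k)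
    simp only [hg]
    rw [hfact]
    push_cast
    field_simp
    ring
  have hs1 : Summable (fun k => g (k + 1)) := by
    have := (Real.summable_pow_div_factorial lam).mul_left (lam * Real.exp (-lam))
    exact this.congr (fun k => (hshift k).symm)
  have hsg : Summable g := (summable_nat_add_iff 1).mp hs1
  refine ⟨hsg, ?_⟩
  rw [Summable.tsum_eq_zero_add hsg]
  have hg0 : g 0 = 0 := by simp [hg]
  rw [hg0, zero_add, tsum_congr hshift, tsum_mul_left, exp_tsum, mul_assoc, ← Real.exp_add]
  simp

lemma gen_fun_eq {lam : ℝ} (r : ℝ) :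
    ∑' k : ℕ, (Real.exp (-lam) * lam ^ k / k !) * r ^ k = Real.exp (lam * (r - 1)) := by
  have h1 : ∀ k : ℕ, (Real.exp (-lam) * lam ^ k / k !) * r ^ k
      = Real.exp (-lam) * ((lam * r) ^ k / k !) := by
    intro k
    rw [mul_pow]
    ring
  rw [tsum_congr h1, tsum_mul_left, exp_tsum, ← Real.exp_add]
  congr 1
  ring

lemma root_unique {lam a b : ℝ} (hlam : 0 < lam)
    (ha : a ∈ Set.Ioo (0:ℝ) 1) (hb : b ∈ Set.Ioo (0:ℝ) 1)
    (hea : a = Real.exp (lam * (a - 1))) (heb : b = Real.exp (lam * (b - 1))) : a = b := by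
  have key : ∀ x y : ℝ, 0 < x → x < y → y < 1 → x = Real.exp (lam * (x - 1)) →
      y = Real.exp (lam * (y - 1)) → False := by
    intro x y hx hxy hy1 hex hey
    set t := (1 - y) / (1 - x) with ht
    have hx1 : x < 1 := hxy.trans hy1
    have h1x : 0 < 1 - x := by linarith
    have ht0 : 0 < t := div_pos (by linarith) h1x
    have ht1 : t < 1 := (div_lt_one h1x).mpr (by linarith)
    have h1 : t * (x - 1) = -(1 - y) := by
      rw [ht]; field_simp; ring
    have harg : t * (lam * (x - 1)) + (1 - t) * 0 = lam * (y - 1) := by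
      have h2 : t * (lam * (x - 1)) + (1 - t) * 0 = lam * (t * (x - 1)) := by ring
      rw [h2, h1]; ring
    have hne : lam * (x - 1) ≠ (0:ℝ) := by nlinarith
    have ht1' : (0:ℝ) < 1 - t := by linarith
    have habt : t + (1 - t) = 1 := by ring
    have hconv := strictConvexOn_exp.2 (Set.mem_univ (lam * (x - 1))) (Set.mem_univ 0)
      hne ht0 ht1' habt
    simp only [smul_eq_mul] at hconv
    rw [harg, Real.exp_zero, ← hex] at hconv
    have hyx : t * x + (1 - t) * 1 = y := by linear_combination h1
    rw [hyx, ← hey] at hconv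
    exact lt_irrefl y hconv
  rcases lt_trichotomy a b with h | h | h
  · exact (key a b ha.1 h hb.2 hea heb).elim
  · exact h
  · exact (key b a hb.1 h ha.2 heb hea).elim

end QueueAux
end PartE
open QueueAux Filter Topology in
/-- Let `λ > 0` and let the arrivals `ξ` be i.i.d. Poisson with mean
`λ`.  For the queuing chain `Q₀ = 1`, `Q_{i+1} = (Q_i ∸ 1) + ξ_{i+1}`, the probability
of ever hitting state `0` equals `1` if `λ ≤ 1`, and equals the unique `ρ ∈ (0,1)` with
`ρ = e^{λ(ρ−1)}` if `λ > 1`. -/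
theorem queuing_chain_hitting_probability
    (lam : ℝ) (hlam : 0 < lam)
    {Ω : Type*} [MeasurableSpace Ω] (μ : Measure Ω) [IsProbabilityMeasure μ]
    (ξ : ℕ → Ω → ℕ) (hmeas : ∀ i, Measurable (ξ i))
    (hindep : iIndepFun ξ μ)
    (hdist : ∀ i : ℕ, μ.map (ξ i) = (poissonPMF lam.toNNReal).toMeasure) :
    (lam ≤ 1 → μ {ω | ∃ i, Qchain ξ ω i = 0} = 1) ∧
    (1 < lam →
      ∃ ρ ∈ Set.Ioo (0 : ℝ) 1, ρ = Real.exp (lam * (ρ - 1)) ∧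
        (μ {ω | ∃ i, Qchain ξ ω i = 0}).toReal = ρ ∧
        ∀ ρ' ∈ Set.Ioo (0 : ℝ) 1, ρ' = Real.exp (lam * (ρ' - 1)) → ρ' = ρ) := by
  classical
  have hlam0 : (0:ℝ) ≤ lam := hlam.le
  set p : ℕ → ENNReal := fun k => poissonPMF lam.toNNReal k with hp
  have hsingle : ∀ i k, μ (ξ i ⁻¹' {k}) = p k := by
    intro i k
    rw [← Measure.map_apply (hmeas i) (measurableSet_singleton k), hdist i,
      PMF.toMeasure_apply_singleton _ _ (measurableSet_singleton k)]
  have hEv : {ω | ∃ i, Qchain ξ ω i = 0} = Aev ξ 0 1 := Set.ext (fun ω => qchain_event ξ ω)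
  set ρ : ENNReal := μ (Aev ξ 0 1) with hρ
  have hρ_top : ρ ≠ ⊤ := measure_ne_top μ _
  have hρ_le : ρ ≤ 1 := prob_le_one
  set r : ℝ := ρ.toReal with hr
  have hr0 : 0 ≤ r := ENNReal.toReal_nonneg
  have hr1 : r ≤ 1 := by
    have := ENNReal.toReal_mono (by simp : (1:ENNReal) ≠ ⊤) hρ_le
    simpa using this
  have hpreal : ∀ k, (p k).toReal = Real.exp (-lam) * lam ^ k / (Nat.factorial k) := by
    intro k
    have hpk : p k = ENNReal.ofReal (ProbabilityTheory.poissonPMFReal lam.toNNReal k) := rfl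
    rw [hpk, ENNReal.toReal_ofReal ProbabilityTheory.poissonPMFReal_nonneg,
      poisson_real_eq hlam0]
  have hfix : ρ = ∑' k, p k * ρ ^ k := meas_fixed_point hmeas hindep hsingle
  have hkey : r = Real.exp (lam * (r - 1)) := by
    have h1 : r = ∑' k, (p k).toReal * r ^ k := by
      rw [hr]
      conv_lhs => rw [hfix]
      rw [ENNReal.tsum_toReal_eq (fun k =>
        ENNReal.mul_ne_top (PMF.apply_ne_top _ _) (ENNReal.pow_ne_top hρ_top))]
      exact tsum_congr fun k => by rw [ENNReal.toReal_mul, ENNReal.toReal_pow]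
    conv_lhs => rw [h1]
    rw [tsum_congr (fun k => by rw [hpreal k]), gen_fun_eq]
  constructor
  · -- subcritical / critical case
    intro hle
    rw [hEv]
    have hr_eq : r = 1 := by
      by_contra hne
      have hrlt : r < 1 := lt_of_le_of_ne hr1 hne
      have hxne : lam * (r - 1) ≠ 0 :=
        (mul_neg_of_pos_of_neg hlam (by linarith)).ne
      have h2 := Real.add_one_lt_exp hxne
      rw [← hkey] at h2
      nlinarith [mul_nonneg (by linarith : (0:ℝ) ≤ 1 - lam) (by linarith : (0:ℝ) ≤ 1 - r)]
    exact (ENNReal.toReal_eq_one_iff ρ).mp hr_eq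
  · -- supercritical case
    intro hgt
    have hcast : Measurable (fun n : ℕ => (n : ℝ)) := Measurable.of_discrete
    set X : ℕ → Ω → ℝ := fun i ω => (ξ i ω : ℝ) with hX
    have hXmeas : ∀ i, Measurable (X i) := fun i => hcast.comp (hmeas i)
    have hnonneg : ∀ k : ℕ, 0 ≤ (k:ℝ) * (Real.exp (-lam) * lam ^ k / (Nat.factorial k)) := by
      intro k
      have : (0:ℝ) ≤ Real.exp (-lam) * lam ^ k / (Nat.factorial k) := by positivity
      exact mul_nonneg (Nat.cast_nonneg k) this
    have hofr : ∀ k : ℕ, (k : ENNReal) * p k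
        = ENNReal.ofReal ((k:ℝ) * (Real.exp (-lam) * lam ^ k / (Nat.factorial k))) := by
      intro k
      have hpk : p k = ENNReal.ofReal (ProbabilityTheory.poissonPMFReal lam.toNNReal k) := rfl
      rw [hpk, poisson_real_eq hlam0, ← ENNReal.ofReal_natCast k,
        ← ENNReal.ofReal_mul (Nat.cast_nonneg k)]
    have hint_nu : Integrable (fun n : ℕ => (n:ℝ)) ((poissonPMF lam.toNNReal).toMeasure) := by
      refine ⟨hcast.aestronglyMeasurable, ?_⟩
      rw [hasFiniteIntegral_def]
      rw [lintegral_countable' (fun k : ℕ => ‖(k:ℝ)‖ₑ)]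
      have heq : ∀ k : ℕ, ‖(k:ℝ)‖ₑ * (poissonPMF lam.toNNReal).toMeasure {k}
          = ENNReal.ofReal ((k:ℝ) * (Real.exp (-lam) * lam ^ k / (Nat.factorial k))) := by
        intro k
        rw [PMF.toMeasure_apply_singleton _ _ (measurableSet_singleton k)]
        have hnn : ‖(k:ℝ)‖ₑ = (k : ENNReal) := by
          simp [Real.nnnorm_natCast]
        rw [hnn]
        exact hofr k
      rw [tsum_congr heq, ← ENNReal.ofReal_tsum_of_nonneg hnonneg (poisson_mean hlam).1]
      exact ENNReal.ofReal_lt_top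
    have hint : Integrable (X 0) μ := by
      have h0 : Integrable (fun n : ℕ => (n:ℝ)) (μ.map (ξ 0)) := by
        rw [hdist 0]; exact hint_nu
      exact (integrable_map_measure hcast.aestronglyMeasurable (hmeas 0).aemeasurable).mp h0
    have hmean : (∫ ω, X 0 ω ∂μ) = lam := by
      have h1 : ∫ ω, X 0 ω ∂μ = ∫ n, (n:ℝ) ∂(μ.map (ξ 0)) :=
        (integral_map (hmeas 0).aemeasurable hcast.aestronglyMeasurable).symm
      rw [h1, hdist 0, integral_countable' hint_nu]
      have h2 : ∀ k : ℕ, (poissonPMF lam.toNNReal).toMeasure.real {k} • (k:ℝ)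
          = (k:ℝ) * (Real.exp (-lam) * lam ^ k / (Nat.factorial k)) := by
        intro k
        rw [measureReal_def, PMF.toMeasure_apply_singleton _ _ (measurableSet_singleton k), smul_eq_mul,
          mul_comm]
        congr 1
        exact hpreal k
      rw [tsum_congr h2, (poisson_mean hlam).2]
    have hpair : Pairwise (Function.onFun (IndepFun · · μ) X) := by
      intro i j hij
      exact (hindep.indepFun hij).comp hcast hcast
    have hident : ∀ i, IdentDistrib (X i) (X 0) μ μ := by
      intro i
      refine ⟨(hXmeas i).aemeasurable, (hXmeas 0).aemeasurable, ?_⟩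
      have e : ∀ j : ℕ, (fun ω => ((ξ j ω : ℕ) : ℝ)) = (fun n : ℕ => (n:ℝ)) ∘ (ξ j) :=
        fun j => rfl
      show μ.map (X i) = μ.map (X 0)
      rw [hX]
      simp only []
      rw [e i, e 0, ← Measure.map_map hcast (hmeas i), ← Measure.map_map hcast (hmeas 0),
        hdist i, hdist 0]
    have hslln := ProbabilityTheory.strong_law_ae X hint hpair hident
    rw [hmean] at hslln
    have hnull : μ {ω | ¬ Tendsto (fun n : ℕ => (n:ℝ)⁻¹ • ∑ i ∈ Finset.range n, X i ω)
        atTop (𝓝 lam)} = 0 := ae_iff.mp hslln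
    have hsub : (⋂ k, Aev ξ 0 k) ⊆ {ω | ¬ Tendsto
        (fun n : ℕ => (n:ℝ)⁻¹ • ∑ i ∈ Finset.range n, X i ω) atTop (𝓝 lam)} := by
      intro ω hω
      simp only [Set.mem_setOf_eq]
      intro htend
      have hev : ∀ᶠ n : ℕ in atTop, 1 < (n:ℝ)⁻¹ • ∑ i ∈ Finset.range n, X i ω :=
        htend.eventually (lt_mem_nhds hgt)
      obtain ⟨N, hN⟩ := Filter.eventually_atTop.mp hev
      obtain ⟨n, hn⟩ := Set.mem_iInter.mp hω (N + 1)
      have hWn : W ξ 0 n ω + (N + 1) ≤ n := hn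
      have hnN : N ≤ n := by omega
      have h2 := hN n hnN
      have h3 : ∑ i ∈ Finset.range n, X i ω = ((W ξ 0 n ω : ℕ) : ℝ) := by
        simp only [hX, W, Nat.cast_sum]
        exact Finset.sum_congr rfl fun j _ => by rw [zero_add]
      rw [h3, smul_eq_mul, inv_mul_eq_div] at h2
      have hnpos : (0:ℝ) < (n:ℝ) := by
        have : 0 < n := by omega
        exact_mod_cast this
      have h4 : (n:ℝ) < ((W ξ 0 n ω : ℕ) : ℝ) := (one_lt_div hnpos).mp h2
      have h5 : n < W ξ 0 n ω := by exact_mod_cast h4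
      omega
    have hzero : μ (⋂ k, Aev ξ 0 k) = 0 := measure_mono_null hsub hnull
    have htendA : Tendsto (fun k => μ (Aev ξ 0 k)) atTop (𝓝 0) := by
      have := tendsto_measure_iInter_atTop
        (fun k => (measurableSet_Aev hmeas 0 k).nullMeasurableSet)
        (Aev_antitone ξ 0) ⟨0, measure_ne_top μ _⟩
      rw [hzero] at this
      exact this
    have hpow : ∀ k, μ (Aev ξ 0 k) = ρ ^ k := fun k => meas_Aev_pow hmeas hindep hsingle k 0
    have hρlt : ρ < 1 := by
      rcases lt_or_eq_of_le hρ_le with h | h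
      · exact h
      · exfalso
        have hconst : Tendsto (fun _ : ℕ => (1:ENNReal)) atTop (𝓝 0) := by
          have : (fun k => μ (Aev ξ 0 k)) = fun _ : ℕ => (1:ENNReal) := by
            funext k
            rw [hpow k, h, one_pow]
          rwa [this] at htendA
        have := tendsto_nhds_unique hconst tendsto_const_nhds
        simp at this
    have hrlt1 : r < 1 := by
      have := (ENNReal.toReal_lt_toReal hρ_top (by simp : (1:ENNReal) ≠ ⊤)).mpr hρlt
      simpa using this
    have hrpos : 0 < r := by
      have hss : ξ 0 ⁻¹' {0} ⊆ Aev ξ 0 1 := by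
        intro ω hω
        have hω0 : ξ 0 ω = 0 := hω
        refine ⟨1, ?_⟩
        have h1 : W ξ 0 1 ω = W ξ 0 0 ω + ξ (0+0) ω := W_succ ξ 0 0 ω
        have h2 : W ξ 0 0 ω = 0 := W_zero ξ 0 ω
        have h3 : ξ (0+0) ω = 0 := hω0
        omega
      have hle2 : p 0 ≤ ρ := by
        rw [hρ, ← hsingle 0 0]
        exact measure_mono hss
      have hp0 : 0 < (p 0).toReal := by
        rw [hpreal 0]
        positivity
      have := ENNReal.toReal_mono hρ_top hle2
      rw [← hr] at this
      linarith
    refine ⟨r, ⟨hrpos, hrlt1⟩, hkey, ?_, ?_⟩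
    · rw [hEv, ← hρ, ← hr]
    · intro ρ' hIoo heq
      exact root_unique hlam hIoo ⟨hrpos, hrlt1⟩ heq hkey
end
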